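/- arXiv:2405.10124 — 6 statements merged into one kernel-verified Lean document; each statement's English description precedes it below -/
import Mathlib

section
/- Let n, m ≥ 1 be integers, let x_1, …, x_n be nonnegative real numbers, and for each j ∈ {1,…,m} let σ_j be a permutation of {1,…,n}. Let p_1, …, p_m be nonnegative rational numbers with ∑_{j=1}^m p_j = p. Then ∑_{i=1}^n ∏_{j=1}^m x_{σ_j(i)}^{p_j} ≤ ∑_{i=1}^n x_i^p. -/
open Finset

/-- Lemma 2.2 (AM–GM-type rearrangement inequality): for nonnegative reals
`x₁, …, xₙ`, permutations `σ₁, …, σ_m` of `{1, …, n}`, and nonnegative rational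
exponents `p₁, …, p_m` summing to `p`, we have
`∑ i, ∏ j, x_{σ_j(i)} ^ (p j) ≤ ∑ i, x i ^ p`. -/
theorem sum_prod_perm_rpow_le_sum_rpow
    (n m : ℕ) (hn : 1 ≤ n) (hm : 1 ≤ m)
    (x : Fin n → ℝ) (hx : ∀ i, 0 ≤ x i)
    (σ : Fin m → Equiv.Perm (Fin n))
    (p : Fin m → ℚ) (hp : ∀ j, 0 ≤ p j)
    (ptot : ℚ) (hptot : ∑ j, p j = ptot) :
    ∑ i, ∏ j, x (σ j i) ^ ((p j : ℝ)) ≤ ∑ i, x i ^ ((ptot : ℝ)) := by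
  rcases eq_or_lt_of_le (by rw [← hptot]; exact Finset.sum_nonneg fun j _ => hp j :
      (0:ℚ) ≤ ptot) with h0 | h0
  · -- ptot = 0, hence all p j = 0
    have hpj : ∀ j, p j = 0 := by
      intro j
      have := (Finset.sum_eq_zero_iff_of_nonneg (fun j _ => hp j)).mp
        (by rw [hptot, ← h0])
      exact this j (mem_univ j)
    simp [hpj, ← h0]
  · have hpt : (0:ℝ) < (ptot:ℝ) := by exact_mod_cast h0
    have key : ∀ i, ∏ j, x (σ j i) ^ ((p j : ℝ)) ≤
        ∑ j, ((p j : ℝ) / ptot) * x (σ j i) ^ ((ptot:ℝ)) := by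
      intro i
      have := Real.geom_mean_le_arith_mean_weighted Finset.univ
        (fun j => (p j : ℝ) / ptot) (fun j => x (σ j i) ^ ((ptot:ℝ)))
        (fun j _ => div_nonneg (by exact_mod_cast hp j) hpt.le)
        (by
          rw [← Finset.sum_div, div_eq_one_iff_eq hpt.ne']
          exact_mod_cast hptot)
        (fun j _ => Real.rpow_nonneg (hx _) _)
      refine le_trans (le_of_eq ?_) this
      refine Finset.prod_congr rfl fun j _ => ?_
      rw [← Real.rpow_mul (hx _)]
      congr 1
      field_simp
    calc ∑ i, ∏ j, x (σ j i) ^ ((p j : ℝ))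
        ≤ ∑ i, ∑ j, ((p j : ℝ) / ptot) * x (σ j i) ^ ((ptot:ℝ)) :=
          Finset.sum_le_sum fun i _ => key i
      _ = ∑ j, ((p j : ℝ) / ptot) * ∑ i, x (σ j i) ^ ((ptot:ℝ)) := by
          rw [Finset.sum_comm]; simp [Finset.mul_sum]
      _ = ∑ j, ((p j : ℝ) / ptot) * ∑ i, x i ^ ((ptot:ℝ)) := by
          refine Finset.sum_congr rfl fun j _ => ?_
          congr 1
          exact Fintype.sum_equiv (σ j) _ _ fun i => rfl
      _ = ∑ i, x i ^ ((ptot:ℝ)) := by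
          rw [← Finset.sum_mul, ← Finset.sum_div, show ∑ j, (p j:ℝ) = (ptot:ℝ) by
            exact_mod_cast hptot, div_self hpt.ne', one_mul]
end

section
/- Let q be a prime power, let 1 ≤ k ≤ n and r ≥ 1 be integers, let α_1, …, α_r be nonnegative real numbers, and let f : 𝔽_q^n → [0,∞). Then the uniform average over all k-dimensional 𝔽_q-linear subspaces C of 𝔽_q^n of the sum ∑ ∏_{i=1}^r f(c_i)^{α_i}, taken over all ordered r-tuples (c_1,…,c_r) of pairwise distinct nonzero elements of C, is at most ∑_{j=0}^{r−1} ((q^k − 1)/(q^n − 1))^{r−j} · ∑ ∏_{i=1}^r f(c_i)^{α_i}, where the inner sum is over all ordered r-tuples (c_1,…,c_r) of pairwise distinct nonzero vectors of 𝔽_q^n whose 𝔽_q-linear span has dimension r − j. -/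
/-!
Exchanging the two sums, a tuple `c` is counted once for every `k`-dimensional `C ⊇ span c`.
Since `GL(V)` acts transitively on subspaces of a given dimension, the number `N_k(W)` of
`k`-dimensional subspaces containing `W` depends only on `d = dim W`. Counting the pairs `(C, y)`
with `dim C = k`, `C ⊇ W'` and `y ∈ C \ W'`, where `dim W' = d - 1`, gives
`N_k(W) (q^n - q^(d-1)) = N_k(W') (q^k - q^(d-1))`, and
`(q^k - q^i) / (q^n - q^i) ≤ (q^k - 1) / (q^n - 1)`, so `N_k(W) ≤ N_k(0) ρ^d` with
`ρ = (q^k - 1) / (q^n - 1)`. Sorting the tuples by the dimension `r - j` of their span finishes.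
-/

open scoped Classical
open Finset Module

theorem sub_div_sub_le_sub_one_div_sub_one {K : Type*} [Field K] [LinearOrder K]
    [IsStrictOrderedRing K] {a b c : K} (ha : 1 ≤ a) (hac : a < c) (hbc : b ≤ c) :
    (b - a) / (c - a) ≤ (b - 1) / (c - 1) := by
  rw [div_le_div_iff₀ (by linarith) (by linarith)]
  nlinarith [mul_nonneg (sub_nonneg.2 ha) (sub_nonneg.2 hbc)]

theorem Finset.sum_eq_sum_range_sum_filter_eq_sub {α M : Type*} [AddCommMonoid M]
    {s : Finset α} {ℓ : α → ℕ} {r : ℕ} (h : ∀ a ∈ s, 1 ≤ ℓ a ∧ ℓ a ≤ r) (g : ℕ → α → M) :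
    ∑ a ∈ s, g (ℓ a) a = ∑ j ∈ range r, ∑ a ∈ s with ℓ a = r - j, g (r - j) a := by
  rw [← sum_fiberwise_of_maps_to (g := fun a => r - ℓ a) (t := range r)
    fun a ha => mem_range.2 (by have := h a ha; omega)]
  refine sum_congr rfl fun j _ => ?_
  have hfiber : ({a ∈ s | r - ℓ a = j} : Finset α) = {a ∈ s | ℓ a = r - j} := by
    refine filter_congr fun a ha => ?_
    have := h a ha
    omega
  rw [hfiber]
  exact sum_congr rfl fun a ha => by rw [(mem_filter.1 ha).2]

namespace Submodule

variable {F V : Type*} [Field F] [AddCommGroup V] [Module F V]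

theorem exists_finrank_eq {d : ℕ} (hd : d ≤ finrank F V) :
    ∃ W : Submodule F V, finrank F W = d := by
  obtain ⟨b, hb⟩ := exists_linearIndependent_of_le_finrank hd
  exact ⟨span F (Set.range b), by rw [finrank_span_eq_card hb, Fintype.card_fin]⟩

variable [FiniteDimensional F V]

theorem exists_linearEquiv_map_eq_of_finrank_eq {W₁ W₂ : Submodule F V}
    (h : finrank F W₁ = finrank F W₂) : ∃ e : V ≃ₗ[F] V, W₁.map (e : V →ₗ[F] V) = W₂ := by
  obtain ⟨U₁, hU₁⟩ := W₁.exists_isCompl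
  obtain ⟨U₂, hU₂⟩ := W₂.exists_isCompl
  obtain ⟨eW⟩ := FiniteDimensional.nonempty_linearEquiv_of_finrank_eq h
  obtain ⟨eU⟩ : Nonempty (U₁ ≃ₗ[F] U₂) := by
    apply FiniteDimensional.nonempty_linearEquiv_of_finrank_eq
    have := finrank_add_eq_of_isCompl hU₁
    have := finrank_add_eq_of_isCompl hU₂
    omega
  let e := (prodEquivOfIsCompl W₁ U₁ hU₁).symm ≪≫ₗ eW.prodCongr eU ≪≫ₗ
    prodEquivOfIsCompl W₂ U₂ hU₂
  have he : (e : V →ₗ[F] V) ∘ₗ W₁.subtype = W₂.subtype ∘ₗ (eW : W₁ →ₗ[F] W₂) := by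
    ext w
    simp [e]
  refine ⟨e, ?_⟩
  rw [← range_subtype W₁, ← LinearMap.range_comp, he,
    LinearMap.range_comp_of_range_eq_top _ eW.range, range_subtype]

theorem one_le_finrank_span_range {ι : Type*} {c : ι → V} {i : ι} (hi : c i ≠ 0) :
    1 ≤ finrank F (span F (Set.range c)) :=
  one_le_finrank_iff.2 fun h => hi <| (mem_bot F).1 (h ▸ subset_span ⟨i, rfl⟩)

end Submodule

-- `(q^k - 1) / (q^n - 1)` is the probability that a fixed nonzero vector lies in a uniformly
-- random `k`-dimensional subspace.
noncomputable def averagingRatio (F V : Type*) [Field F] [Fintype F] [AddCommGroup V] [Module F V]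
    (k : ℕ) : ℝ :=
  ((Fintype.card F : ℝ) ^ k - 1) / ((Fintype.card F : ℝ) ^ finrank F V - 1)

theorem averagingRatio_nonneg {F V : Type*} [Field F] [Fintype F] [AddCommGroup V] [Module F V]
    (k : ℕ) : 0 ≤ averagingRatio F V k := by
  have hq : (1 : ℝ) ≤ Fintype.card F := by exact_mod_cast Fintype.card_pos
  exact div_nonneg (sub_nonneg.2 (one_le_pow₀ hq)) (sub_nonneg.2 (one_le_pow₀ hq))

section Superspaces

variable {F V : Type*} [Field F] [AddCommGroup V] [Module F V] [Fintype V]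

noncomputable def superspacesOfFinrank (k : ℕ) (W : Submodule F V) : Finset (Submodule F V) :=
  {C | finrank F C = k ∧ W ≤ C}

variable {k : ℕ} {W W' : Submodule F V}

@[simp]
theorem mem_superspacesOfFinrank {C : Submodule F V} :
    C ∈ superspacesOfFinrank k W ↔ finrank F C = k ∧ W ≤ C := by
  simp [superspacesOfFinrank]

theorem superspacesOfFinrank_bot (k : ℕ) :
    superspacesOfFinrank k (⊥ : Submodule F V) =
      ({C | finrank F C = k} : Finset (Submodule F V)) := by
  ext C
  simp

theorem superspacesOfFinrank_eq_empty (h : k < finrank F W) :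
    superspacesOfFinrank k W = ∅ := by
  ext C
  simp only [mem_superspacesOfFinrank, Finset.notMem_empty, iff_false, not_and]
  rintro rfl hWC
  exact (Submodule.finrank_mono hWC).not_gt h

theorem card_superspacesOfFinrank_congr (h : finrank F W = finrank F W') :
    #(superspacesOfFinrank k W) = #(superspacesOfFinrank k W') := by
  obtain ⟨e, he⟩ := Submodule.exists_linearEquiv_map_eq_of_finrank_eq h
  refine card_equiv (Submodule.orderIsoMapComap e).toEquiv fun C => ?_
  simp only [mem_superspacesOfFinrank, ← he, RelIso.coe_fn_toEquiv,
    Submodule.orderIsoMapComap_apply, LinearEquiv.finrank_map_eq,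
    Submodule.map_le_map_iff_of_injective e.injective]

theorem sum_sum_filter_forall_mem_eq_sum_card_superspacesOfFinrank_smul {ι M : Type*}
    [Fintype ι] [DecidableEq ι] [AddCommMonoid M] (k : ℕ) (p : (ι → V) → Prop) [DecidablePred p]
    (w : (ι → V) → M) :
    ∑ C ∈ ({C | finrank F C = k} : Finset (Submodule F V)),
        ∑ c ∈ ({c | p c ∧ ∀ i, c i ∈ C} : Finset (ι → V)), w c =
      ∑ c ∈ ({c | p c} : Finset (ι → V)),
        #(superspacesOfFinrank k (Submodule.span F (Set.range c))) • w c := by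
  calc _ = ∑ C ∈ ({C | finrank F C = k} : Finset (Submodule F V)),
          ∑ c ∈ ({c | p c} : Finset (ι → V)), if ∀ i, c i ∈ C then w c else 0 :=
        sum_congr rfl fun C _ => by rw [← sum_filter, filter_filter]
    _ = _ := by
        rw [sum_comm]
        refine sum_congr rfl fun c _ => ?_
        rw [← sum_filter, sum_const, filter_filter]
        congr 2
        ext C
        simp [Submodule.span_le, Set.range_subset_iff]

variable [Fintype F]

theorem card_filter_mem_eq_pow_finrank (W : Submodule F V) :
    #{x | x ∈ W} = Fintype.card F ^ finrank F W := by
  rw [← Fintype.card_subtype, ← card_eq_pow_finrank (K := F) (V := W)]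

theorem card_filter_notMem_eq_pow_finrank_sub (W : Submodule F V) :
    #{x | x ∉ W} = Fintype.card F ^ finrank F V - Fintype.card F ^ finrank F W := by
  rw [filter_not, card_sdiff_of_subset (filter_subset _ _), card_filter_mem_eq_pow_finrank,
    card_univ, card_eq_pow_finrank (K := F)]

theorem card_superspacesOfFinrank_mul (hW : finrank F W = finrank F W' + 1) :
    #(superspacesOfFinrank k W) * (Fintype.card F ^ finrank F V - Fintype.card F ^ finrank F W') =
      #(superspacesOfFinrank k W') * (Fintype.card F ^ k - Fintype.card F ^ finrank F W') := by
  have hvectors : ∀ C ∈ superspacesOfFinrank k W',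
      #(bipartiteAbove (fun (C : Submodule F V) x => x ∈ C) {x | x ∉ W'} C) =
        Fintype.card F ^ k - Fintype.card F ^ finrank F W' := by
    intro C hC
    rw [mem_superspacesOfFinrank] at hC
    have : bipartiteAbove (fun (C : Submodule F V) x => x ∈ C) {x | x ∉ W'} C =
        univ.filter (· ∈ C) \ univ.filter (· ∈ W') := by
      ext x
      simp [bipartiteAbove, and_comm]
    rw [this, card_sdiff_of_subset (monotone_filter_right _ fun _ _ hx => hC.2 hx),
      card_filter_mem_eq_pow_finrank, card_filter_mem_eq_pow_finrank, hC.1]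
  have hsubspaces : ∀ x ∈ ({x | x ∉ W'} : Finset V),
      #((superspacesOfFinrank k W').bipartiteBelow (fun C x => x ∈ C) x) =
        #(superspacesOfFinrank k W) := by
    intro x hx
    rw [mem_filter] at hx
    have : (superspacesOfFinrank k W').bipartiteBelow (fun C x => x ∈ C) x =
        superspacesOfFinrank k (W' ⊔ Submodule.span F {x}) := by
      ext C
      simp [bipartiteBelow, Submodule.span_singleton_le_iff_mem, and_assoc]
    rw [this]
    exact card_superspacesOfFinrank_congr
      ((Submodule.finrank_sup_span_singleton hx.2).trans hW.symm)
  have := sum_card_bipartiteAbove_eq_sum_card_bipartiteBelow (s := superspacesOfFinrank k W')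
    (t := {x | x ∉ W'}) (r := fun C x => x ∈ C)
  rw [sum_congr rfl hvectors, sum_congr rfl hsubspaces, sum_const, sum_const, smul_eq_mul,
    smul_eq_mul, card_filter_notMem_eq_pow_finrank_sub] at this
  rw [mul_comm, ← this]

theorem card_superspacesOfFinrank_le_mul (hk : k ≤ finrank F V)
    (hW : finrank F W = finrank F W' + 1) :
    (#(superspacesOfFinrank k W) : ℝ) ≤ #(superspacesOfFinrank k W') * averagingRatio F V k := by
  set q := Fintype.card F
  have hq : (1 : ℝ) < q := by exact_mod_cast Fintype.one_lt_card
  rcases lt_or_ge k (finrank F W) with hkW | hWk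
  · rw [superspacesOfFinrank_eq_empty hkW, card_empty, Nat.cast_zero]
    exact mul_nonneg (Nat.cast_nonneg _) (averagingRatio_nonneg k)
  have hW'V : finrank F W' < finrank F V := by
    have := Submodule.finrank_le W
    omega
  have hcount := congrArg (Nat.cast : ℕ → ℝ) (card_superspacesOfFinrank_mul (k := k) hW)
  push_cast [Nat.pow_le_pow_right Fintype.card_pos (by omega : finrank F W' ≤ k),
    Nat.pow_le_pow_right Fintype.card_pos hW'V.le] at hcount
  have hpos : (0 : ℝ) < (q : ℝ) ^ finrank F V - (q : ℝ) ^ finrank F W' :=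
    sub_pos.2 (pow_lt_pow_right₀ hq hW'V)
  calc (#(superspacesOfFinrank k W) : ℝ)
      = #(superspacesOfFinrank k W') * (((q : ℝ) ^ k - (q : ℝ) ^ finrank F W') /
          ((q : ℝ) ^ finrank F V - (q : ℝ) ^ finrank F W')) := by
        rw [mul_div_assoc', eq_div_iff hpos.ne', hcount]
    _ ≤ _ := mul_le_mul_of_nonneg_left (sub_div_sub_le_sub_one_div_sub_one (one_le_pow₀ hq.le)
        (pow_lt_pow_right₀ hq hW'V) (pow_le_pow_right₀ hq.le hk)) (Nat.cast_nonneg _)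

theorem card_superspacesOfFinrank_le (hk : k ≤ finrank F V) (W : Submodule F V) :
    (#(superspacesOfFinrank k W) : ℝ) ≤
      #{C : Submodule F V | finrank F C = k} * averagingRatio F V k ^ finrank F W := by
  induction h : finrank F W generalizing W with
  | zero => rw [Submodule.finrank_eq_zero.1 h, superspacesOfFinrank_bot, pow_zero, mul_one]
  | succ d ih =>
    obtain ⟨W', hW'⟩ := Submodule.exists_finrank_eq (F := F) (V := V) (d := d) <| by
      have := Submodule.finrank_le W
      omega
    calc (#(superspacesOfFinrank k W) : ℝ)
        ≤ #(superspacesOfFinrank k W') * averagingRatio F V k :=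
          card_superspacesOfFinrank_le_mul hk (h.trans (congrArg (· + 1) hW'.symm))
      _ ≤ #{C : Submodule F V | finrank F C = k} * averagingRatio F V k ^ d *
            averagingRatio F V k :=
          mul_le_mul_of_nonneg_right (ih W' hW') (averagingRatio_nonneg k)
      _ = _ := by rw [mul_assoc, pow_succ]

theorem one_div_card_mul_sum_sum_filter_forall_mem_le {ι : Type*} [Fintype ι] [DecidableEq ι]
    (hk : k ≤ finrank F V) (p : (ι → V) → Prop) [DecidablePred p] {w : (ι → V) → ℝ}
    (hw : ∀ c, 0 ≤ w c) :
    1 / (#{C : Submodule F V | finrank F C = k} : ℝ) *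
        ∑ C ∈ ({C | finrank F C = k} : Finset (Submodule F V)),
          ∑ c ∈ ({c | p c ∧ ∀ i, c i ∈ C} : Finset (ι → V)), w c ≤
      ∑ c ∈ ({c | p c} : Finset (ι → V)),
        averagingRatio F V k ^ finrank F (Submodule.span F (Set.range c)) * w c := by
  obtain ⟨C₀, hC₀⟩ := Submodule.exists_finrank_eq hk
  have hN : (0 : ℝ) < #{C : Submodule F V | finrank F C = k} := by
    exact_mod_cast card_pos.2 ⟨C₀, by simpa using hC₀⟩
  rw [sum_sum_filter_forall_mem_eq_sum_card_superspacesOfFinrank_smul, mul_sum]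
  refine sum_le_sum fun c _ => ?_
  rw [nsmul_eq_mul, ← mul_assoc]
  refine mul_le_mul_of_nonneg_right ?_ (hw c)
  rw [one_div_mul_eq_div, div_le_iff₀ hN, mul_comm]
  exact card_superspacesOfFinrank_le hk _

end Superspaces

theorem extended_averaging_lemma_linear_codes_general
    (q n k r : ℕ) (hkn : k ≤ n) (hr : 1 ≤ r)
    (F : Type) [Field F] [Fintype F] (hF : Fintype.card F = q)
    (α : Fin r → ℝ)
    (f : (Fin n → F) → ℝ) (hf : ∀ x, 0 ≤ f x) :
    (1 / ((Finset.univ.filter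
        (fun C : Submodule F (Fin n → F) => Module.finrank F C = k)).card : ℝ)) *
      ∑ C ∈ Finset.univ.filter
          (fun C : Submodule F (Fin n → F) => Module.finrank F C = k),
        ∑ c ∈ Finset.univ.filter
            (fun c : Fin r → (Fin n → F) =>
              Function.Injective c ∧ (∀ i, c i ≠ 0) ∧ ∀ i, c i ∈ C),
          ∏ i, f (c i) ^ (α i)
    ≤ ∑ j ∈ Finset.range r,
        (((q : ℝ) ^ k - 1) / ((q : ℝ) ^ n - 1)) ^ (r - j) *
          ∑ c ∈ Finset.univ.filter
              (fun c : Fin r → (Fin n → F) =>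
                Function.Injective c ∧ (∀ i, c i ≠ 0) ∧
                  Module.finrank F (Submodule.span F (Set.range c)) = r - j),
            ∏ i, f (c i) ^ (α i) := by
  subst hF
  have hV : finrank F (Fin n → F) = n := finrank_fin_fun F
  have hrank : ∀ c ∈ ({c | Function.Injective c ∧ ∀ i, c i ≠ 0} : Finset (Fin r → Fin n → F)),
      1 ≤ finrank F (Submodule.span F (Set.range c)) ∧
        finrank F (Submodule.span F (Set.range c)) ≤ r := fun c hc =>
    ⟨Submodule.one_le_finrank_span_range ((mem_filter.1 hc).2.2 ⟨0, hr⟩),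
      (finrank_range_le_card c).trans_eq (Fintype.card_fin r)⟩
  have hbound := one_div_card_mul_sum_sum_filter_forall_mem_le (hkn.trans_eq hV.symm)
    (fun c : Fin r → Fin n → F => Function.Injective c ∧ ∀ i, c i ≠ 0)
    (w := fun c => ∏ i, f (c i) ^ α i) fun c => prod_nonneg fun i _ => Real.rpow_nonneg (hf _) _
  simp only [and_assoc] at hbound
  refine hbound.trans_eq ?_
  rw [sum_eq_sum_range_sum_filter_eq_sub hrank
    fun d c => averagingRatio F (Fin n → F) k ^ d * ∏ i, f (c i) ^ α i]
  refine sum_congr rfl fun j _ => ?_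
  rw [mul_sum, filter_filter, averagingRatio, hV]
  congr! 1
  ext c
  simp only [mem_filter, and_assoc]

/-- Extended Averaging Lemma for Linear Codes: the uniform average, over all
`k`-dimensional subspaces `C` of `𝔽_q^n`, of
`∑ ∏_{i=1}^r f(c_i)^{α_i}` over ordered `r`-tuples of pairwise distinct nonzero
codewords of `C`, is bounded by
`∑_{j=0}^{r-1} ((q^k-1)/(q^n-1))^{r-j} ∑_{rank-(r-j) tuples} ∏ f(c_i)^{α_i}`. -/
theorem extended_averaging_lemma_linear_codes
    (q n k r : ℕ) (hq : IsPrimePow q) (hk : 1 ≤ k) (hkn : k ≤ n) (hr : 1 ≤ r)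
    (F : Type) [Field F] [Fintype F] (hF : Fintype.card F = q)
    (α : Fin r → ℝ) (hα : ∀ i, 0 ≤ α i)
    (f : (Fin n → F) → ℝ) (hf : ∀ x, 0 ≤ f x) :
    (1 / ((Finset.univ.filter
        (fun C : Submodule F (Fin n → F) => Module.finrank F C = k)).card : ℝ)) *
      ∑ C ∈ Finset.univ.filter
          (fun C : Submodule F (Fin n → F) => Module.finrank F C = k),
        ∑ c ∈ Finset.univ.filter
            (fun c : Fin r → (Fin n → F) =>
              Function.Injective c ∧ (∀ i, c i ≠ 0) ∧ ∀ i, c i ∈ C),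
          ∏ i, f (c i) ^ (α i)
    ≤ ∑ j ∈ Finset.range r,
        (((q : ℝ) ^ k - 1) / ((q : ℝ) ^ n - 1)) ^ (r - j) *
          ∑ c ∈ Finset.univ.filter
              (fun c : Fin r → (Fin n → F) =>
                Function.Injective c ∧ (∀ i, c i ≠ 0) ∧
                  Module.finrank F (Submodule.span F (Set.range c)) = r - j),
            ∏ i, f (c i) ^ (α i) :=
  extended_averaging_lemma_linear_codes_general q n k r hkn hr F hF α f hf
end

section
/- Let q be a prime power, let r ≥ 2 and 0 < j < r be integers, and let α_1, …, α_r be rational numbers with α_i ≥ 1 for every i; set α = ∑_{i=1}^r α_i. For every ε > 0 there exists a constant C > 0, depending only on q, r, j, and α_1, …, α_r, such that the following holds for all integers 1 ≤ k ≤ n and every probability mass function W on 𝔽_q^n satisfying ∑_{x ∈ 𝔽_q^n} W(x)^α ≤ q^{−(α−1)(n−k+εn)}: q^{n(α−1)−kα} · ((q^k − 1)/(q^n − 1))^{r−j} · ∑_{y ∈ 𝔽_q^n} ∑ ∏_{i=1}^r W(y − c_i)^{α_i} ≤ C · q^{−εn}, where the inner sum is over all ordered r-tuples (c_1,…,c_r)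 of pairwise distinct nonzero vectors of 𝔽_q^n whose 𝔽_q-linear span has dimension exactly r − j. -/
/-!
A tuple `c` of rank `d = r - j` is determined by a set `I` of `d` indices whose entries form a
basis of its span, the coordinates of the remaining entries in that basis (at most `q ^ (d r)`
choices), and the basis entries themselves. For fixed `I` and coordinates, weighted AM-GM over
the dependent entries leaves one dependent entry at a time, and the substitution `x m = y - c m`
turns it into `(1 - s) • y + ∑ μ m • x m`, where `s` is the sum of its coordinates `μ`. If
`s ≠ 1`, summing over `y` produces a full moment `∑ W ^ δ` and the whole sum is a product of
moments; if `s = 1`, `y` drops out at the cost of a factor `q ^ n`, and AM-GM merges the dependent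
entry into one basis entry it involves. Hölder interpolation between `∑ W = 1` and the rate
condition bounds every moment of order `1 ≤ δ ≤ α` by `q ^ (-(δ - 1) t)`, `t = n - k + ε n`, and
since `∑ W ^ α ≥ q ^ (n (1 - α))` the rate condition also forces `ε n ≤ k`. The exponents then
add up to `d - k - (α - d - 1) ε n` and `d - (α - d) ε n`, both at most `d - ε n`.
-/

open scoped Classical
open Finset

noncomputable def moment {V : Type*} [Fintype V] (W : V → ℝ) (δ : ℝ) : ℝ := ∑ v, W v ^ δ

/-- All Rényi entropies of order `1 < δ ≤ A` are at least `t`, in base `Q`. -/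
def MomentDecay {V : Type*} [Fintype V] (W : V → ℝ) (Q t A : ℝ) : Prop :=
  ∀ δ, 1 ≤ δ → δ ≤ A → moment W δ ≤ Q ^ (-((δ - 1) * t))

section Moments

variable {ι : Type*} [Fintype ι] {W : ι → ℝ}

theorem moment_nonneg (hW : ∀ x, 0 ≤ W x) (δ : ℝ) : 0 ≤ moment W δ :=
  sum_nonneg fun x _ => Real.rpow_nonneg (hW x) δ

theorem moment_one (h1 : ∑ x, W x = 1) : moment W 1 = 1 := by
  simp [moment, h1]

theorem moment_le_rpow_moment (hW : ∀ x, 0 ≤ W x) (h1 : ∑ x, W x = 1) {β p : ℝ}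
    (hβ : 1 ≤ β) (hβp : β ≤ p) : moment W β ≤ moment W p ^ ((β - 1) / (p - 1)) := by
  rcases hβ.eq_or_lt with rfl | hβ
  · simp [moment_one h1]
  have hβ' : β - 1 ≠ 0 := (sub_pos.2 hβ).ne'
  have mul_rpow_sub_one : ∀ x, ∀ γ : ℝ, γ ≠ 0 → W x * W x ^ (γ - 1) = W x ^ γ := fun x γ hγ => by
    rw [mul_comm, ← Real.rpow_add_one' (hW x) (by simpa using hγ), sub_add_cancel]
  -- Hölder with weights `W`, applied to `W ^ (β - 1)` and the exponent `(p - 1) / (β - 1)`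
  have holder := Real.inner_le_weight_mul_Lp_of_nonneg univ
    ((one_le_div (sub_pos.2 hβ)).2 (by linarith : β - 1 ≤ p - 1)) W (fun x => W x ^ (β - 1)) hW
    fun x => Real.rpow_nonneg (hW x) _
  simp only [← Real.rpow_mul (hW _), mul_div_cancel₀ _ hβ', h1, Real.one_rpow, one_mul,
    inv_div] at holder
  simpa only [moment, mul_rpow_sub_one _ _ (by linarith : β ≠ 0),
    mul_rpow_sub_one _ _ (by linarith : p ≠ 0)] using holder

theorem card_rpow_le_moment [Nonempty ι] (hW : ∀ x, 0 ≤ W x) (h1 : ∑ x, W x = 1) {p : ℝ}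
    (hp : 1 ≤ p) : (Fintype.card ι : ℝ) ^ (1 - p) ≤ moment W p := by
  set N : ℝ := (Fintype.card ι : ℝ)
  have hN : 0 < N := by simp only [N]; exact_mod_cast Fintype.card_pos
  -- Jensen for the uniform average of `W`
  have jensen := Real.rpow_arith_mean_le_arith_mean_rpow univ (fun _ => N⁻¹) W
    (fun _ _ => by positivity) (by simp [N, hN.ne']) (fun x _ => hW x) hp
  rw [← mul_sum, ← mul_sum, h1, mul_one, Real.inv_rpow hN.le] at jensen
  calc N ^ (1 - p) = N * (N ^ p)⁻¹ := by rw [Real.rpow_sub hN, Real.rpow_one, div_eq_mul_inv]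
    _ ≤ N * (N⁻¹ * ∑ x, W x ^ p) := by gcongr
    _ = moment W p := by rw [← mul_assoc, mul_inv_cancel₀ hN.ne', one_mul, moment]

theorem sum_prod_rpow_eq_prod_moment {κ : Type*} [Fintype κ] [DecidableEq κ] (W : ι → ℝ)
    (b : κ → ℝ) :
    ∑ x : κ → ι, ∏ m, W (x m) ^ b m = ∏ m, moment W (b m) :=
  (Fintype.prod_sum fun m v => W v ^ b m).symm

end Moments

section Decay

variable {V : Type*} [Fintype V] {W : V → ℝ} {Q t A : ℝ}

theorem MomentDecay.of_moment_le (hW : ∀ v, 0 ≤ W v) (h1 : ∑ v, W v = 1) (hQ : 0 < Q)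
    (hrate : moment W A ≤ Q ^ (-((A - 1) * t))) : MomentDecay W Q t A := by
  intro δ hδ hδA
  rcases hδ.eq_or_lt with rfl | hδ
  · simp [moment_one h1]
  have hA : 0 < A - 1 := by linarith
  calc moment W δ ≤ moment W A ^ ((δ - 1) / (A - 1)) := moment_le_rpow_moment hW h1 hδ.le hδA
    _ ≤ (Q ^ (-((A - 1) * t))) ^ ((δ - 1) / (A - 1)) := by
        gcongr
        exact moment_nonneg hW A
    _ = Q ^ (-((δ - 1) * t)) := by
        rw [← Real.rpow_mul hQ.le]
        congr 1
        field_simp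

theorem MomentDecay.prod_le (h : MomentDecay W Q t A) (hW : ∀ v, 0 ≤ W v) (hQ : 0 < Q)
    {κ : Type*} {s : Finset κ} {δ : κ → ℝ} (hδ : ∀ j ∈ s, 1 ≤ δ j) (hδA : ∀ j ∈ s, δ j ≤ A) :
    ∏ j ∈ s, moment W (δ j) ≤ Q ^ (-((∑ j ∈ s, (δ j - 1)) * t)) := by
  calc ∏ j ∈ s, moment W (δ j) ≤ ∏ j ∈ s, Q ^ (-((δ j - 1) * t)) :=
        prod_le_prod (fun j _ => moment_nonneg hW _) fun j hj => h _ (hδ j hj) (hδA j hj)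
    _ = Q ^ (-((∑ j ∈ s, (δ j - 1)) * t)) := by
        rw [← Real.rpow_sum_of_pos hQ, sum_mul, sum_neg_distrib]

theorem le_of_moment_le_rpow [Nonempty V] (hW : ∀ v, 0 ≤ W v) (h1 : ∑ v, W v = 1) (hQ : 1 < Q)
    (hA : 1 < A) {N : ℝ} (hN : (Fintype.card V : ℝ) = Q ^ N)
    (hrate : moment W A ≤ Q ^ (-((A - 1) * t))) : t ≤ N := by
  have h := (card_rpow_le_moment hW h1 hA.le).trans hrate
  rw [hN, ← Real.rpow_mul (by linarith), Real.rpow_le_rpow_left_iff hQ] at h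
  nlinarith

end Decay

theorem prod_rpow_le_sum_mul_rpow {ι : Type*} {s : Finset ι} {a z : ι → ℝ}
    (ha : ∀ i ∈ s, 0 ≤ a i) (hs : 0 < ∑ i ∈ s, a i) (hz : ∀ i ∈ s, 0 ≤ z i) :
    ∏ i ∈ s, z i ^ a i ≤ ∑ i ∈ s, a i / (∑ j ∈ s, a j) * z i ^ (∑ j ∈ s, a j) := by
  convert Real.geom_mean_le_arith_mean_weighted s (fun i => a i / ∑ j ∈ s, a j)
    (fun i => z i ^ ∑ j ∈ s, a j) (fun i hi => div_nonneg (ha i hi) hs.le)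
    (by rw [← sum_div, div_self hs.ne']) (fun i hi => Real.rpow_nonneg (hz i hi) _)
    using 2 with i hi
  rw [← Real.rpow_mul (hz i hi), mul_div_cancel₀ _ hs.ne']

theorem rpow_mul_rpow_le {x y a b : ℝ} (hx : 0 ≤ x) (hy : 0 ≤ y) (ha : 0 ≤ a) (hb : 0 ≤ b)
    (hab : 0 < a + b) :
    x ^ a * y ^ b ≤ a / (a + b) * x ^ (a + b) + b / (a + b) * y ^ (a + b) := by
  have := prod_rpow_le_sum_mul_rpow (s := univ) (a := ![a, b]) (z := ![x, y])
    (by simp [Fin.forall_fin_two, ha, hb]) (by simpa using hab)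
    (by simp [Fin.forall_fin_two, hx, hy])
  simpa [Fin.prod_univ_two, Fin.sum_univ_two] using this

section ChangeOfVariables

variable {F V : Type*} [Field F] [AddCommGroup V] [Module F V] [Fintype V]
  {M : Type*} [AddCommMonoid M]

theorem sum_comp_smul_add (f : V → M) {u : F} (hu : u ≠ 0) (w : V) :
    ∑ v, f (u • v + w) = ∑ v, f v :=
  ((Equiv.addRight w).bijective.comp (MulAction.bijective (Units.mk0 u hu))).sum_comp f

theorem sum_comp_update_sum_smul {κ : Type*} [Fintype κ] [DecidableEq κ] (f : (κ → V) → M)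
    {μ : κ → F} {m₀ : κ} (hm₀ : μ m₀ ≠ 0) :
    ∑ x : κ → V, f (Function.update x m₀ (∑ m, μ m • x m)) = ∑ x, f x := by
  refine (Function.Injective.bijective_of_finite fun x x' h => ?_).sum_comp f
  have hne : ∀ m ≠ m₀, x m = x' m := fun m hm => by simpa [hm] using congrFun h m
  have hrest : ∑ m ∈ univ.erase m₀, μ m • x m = ∑ m ∈ univ.erase m₀, μ m • x' m :=
    sum_congr rfl fun m hm => by rw [hne m (ne_of_mem_erase hm)]
  have h₀ := congrFun h m₀
  simp only [Function.update_self] at h₀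
  rw [← add_sum_erase _ _ (mem_univ m₀), ← add_sum_erase _ _ (mem_univ m₀), hrest] at h₀
  funext m
  by_cases hm : m = m₀
  · subst hm
    exact smul_right_injective V hm₀ (add_right_cancel h₀)
  · exact hne m hm

end ChangeOfVariables

section SingleDependent

variable {F V : Type*} [Field F] [AddCommGroup V] [Module F V] [Fintype V]
  {κ : Type*} [Fintype κ] [DecidableEq κ] {W : V → ℝ} {b : κ → ℝ} {β Q t A : ℝ}

theorem sum_prod_rpow_mul_rpow_sum_smul_le (hW : ∀ v, 0 ≤ W v) (hb : ∀ m, 0 ≤ b m) (hβ : 0 ≤ β)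
    {μ : κ → F} {m₀ : κ} (hm₀ : μ m₀ ≠ 0) (hpos : 0 < b m₀ + β) :
    ∑ x : κ → V, (∏ m, W (x m) ^ b m) * W (∑ m, μ m • x m) ^ β
      ≤ ∏ m, moment W (Function.update b m₀ (b m₀ + β) m) := by
  set γ := b m₀ + β
  set c := Function.update b m₀ γ
  set R : (κ → V) → ℝ := fun x => ∏ m ∈ univ.erase m₀, W (x m) ^ b m
  have split : ∀ (x : κ → V) (e : κ → ℝ),
      ∏ m, W (x m) ^ e m = W (x m₀) ^ e m₀ * ∏ m ∈ univ.erase m₀, W (x m) ^ e m :=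
    fun x e => (mul_prod_erase _ _ (mem_univ m₀)).symm
  have hc : ∀ x : κ → V, ∏ m, W (x m) ^ c m = W (x m₀) ^ γ * R x := fun x => by
    rw [split]
    congr 1
    · simp [c]
    · exact prod_congr rfl fun m hm => by simp [c, ne_of_mem_erase hm]
  have hupd : ∀ x : κ → V, ∏ m, W (Function.update x m₀ (∑ m, μ m • x m) m) ^ c m
      = W (∑ m, μ m • x m) ^ γ * R x := fun x => by
    rw [split]
    congr 1
    · simp [c]
    · exact prod_congr rfl fun m hm => by simp [c, ne_of_mem_erase hm]
  -- weighted AM-GM between the coordinate `x m₀` and the combination `∑ μ m • x m`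
  have pointwise : ∀ x : κ → V, (∏ m, W (x m) ^ b m) * W (∑ m, μ m • x m) ^ β
      ≤ b m₀ / γ * ∏ m, W (x m) ^ c m
        + β / γ * ∏ m, W (Function.update x m₀ (∑ m, μ m • x m) m) ^ c m := fun x => by
    have hR : 0 ≤ R x := prod_nonneg fun m _ => Real.rpow_nonneg (hW _) _
    have := rpow_mul_rpow_le (hW (x m₀)) (hW (∑ m, μ m • x m)) (hb m₀) hβ hpos
    rw [split x b, hc, hupd]
    nlinarith
  calc ∑ x : κ → V, (∏ m, W (x m) ^ b m) * W (∑ m, μ m • x m) ^ β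
      ≤ ∑ x : κ → V, (b m₀ / γ * ∏ m, W (x m) ^ c m
          + β / γ * ∏ m, W (Function.update x m₀ (∑ m, μ m • x m) m) ^ c m) :=
        sum_le_sum fun x _ => pointwise x
    _ = (b m₀ / γ + β / γ) * ∏ m, moment W (c m) := by
        rw [sum_add_distrib, ← mul_sum, ← mul_sum,
          sum_comp_update_sum_smul (fun x => ∏ m, W (x m) ^ c m) hm₀,
          sum_prod_rpow_eq_prod_moment, add_mul]
    _ = ∏ m, moment W (c m) := by rw [← add_div, div_self hpos.ne', one_mul]

theorem sum_prod_rpow_sub_mul_rpow_sub_eq (W : V → ℝ) (b : κ → ℝ) (β : ℝ) (μ : κ → F) (y : V) :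
    ∑ g : κ → V, (∏ m, W (y - g m) ^ b m) * W (y - ∑ m, μ m • g m) ^ β
      = ∑ x : κ → V, (∏ m, W (x m) ^ b m) * W ((1 - ∑ m, μ m) • y + ∑ m, μ m • x m) ^ β := by
  refine Fintype.sum_equiv (Equiv.piCongrRight fun _ => Equiv.subLeft y) _ _ fun g => ?_
  simp only [Equiv.piCongrRight_apply, Pi.map_apply, Equiv.subLeft_apply, smul_sub,
    sum_sub_distrib, ← sum_smul, sub_smul, one_smul]
  rw [sub_add_sub_cancel]

theorem MomentDecay.sum_sum_prod_rpow_mul_rpow_le (hdec : MomentDecay W Q t A)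
    (hW : ∀ v, 0 ≤ W v) (hQ : 0 < Q) (hb : ∀ m, 1 ≤ b m) (hβ : 1 ≤ β)
    (hA : β + ∑ m, b m ≤ A) (μ : κ → F) :
    ∑ y, ∑ g : κ → V, (∏ m, W (y - g m) ^ b m) * W (y - ∑ m, μ m • g m) ^ β
      ≤ Q ^ (-((β + ∑ m, (b m - 1) - 1) * t))
        + Fintype.card V * Q ^ (-((β + ∑ m, (b m - 1)) * t)) := by
  have hbA : ∀ m, b m ≤ A := fun m => by
    have := single_le_sum (fun m _ => (zero_le_one.trans (hb m))) (mem_univ m)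
    linarith
  simp_rw [sum_prod_rpow_sub_mul_rpow_sub_eq]
  by_cases hμ : ∑ m, μ m = 1
  · -- the `y`-dependence cancels; a nonzero coefficient of the combination absorbs `β`
    obtain ⟨m₀, hm₀⟩ : ∃ m₀, μ m₀ ≠ 0 := by
      by_contra! h
      simp [h] at hμ
    have hc : ∀ m, 1 ≤ Function.update b m₀ (b m₀ + β) m ∧ Function.update b m₀ (b m₀ + β) m ≤ A :=
      fun m => by
        rcases eq_or_ne m m₀ with rfl | hm
        · have := single_le_sum (fun m _ => (zero_le_one.trans (hb m))) (mem_univ m)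
          simp only [Function.update_self]
          constructor <;> linarith [hb m]
        · simp only [Function.update_of_ne hm]
          exact ⟨hb m, hbA m⟩
    have hsum : ∑ m, (Function.update b m₀ (b m₀ + β) m - 1) = β + ∑ m, (b m - 1) := by
      simp only [sum_sub_distrib, sum_update_of_mem (mem_univ m₀), sdiff_singleton_eq_erase,
        ← add_sum_erase _ b (mem_univ m₀)]
      ring
    simp only [hμ, sub_self, zero_smul, zero_add, sum_const, card_univ, nsmul_eq_mul]
    refine le_add_of_nonneg_of_le (Real.rpow_nonneg hQ.le _)
      (mul_le_mul_of_nonneg_left ?_ (by positivity))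
    calc _ ≤ ∏ m, moment W (Function.update b m₀ (b m₀ + β) m) :=
          sum_prod_rpow_mul_rpow_sum_smul_le hW (fun m => zero_le_one.trans (hb m))
            (zero_le_one.trans hβ) hm₀ (by linarith [hb m₀])
      _ ≤ _ := by
          rw [← hsum]
          exact hdec.prod_le hW hQ (fun m _ => (hc m).1) (fun m _ => (hc m).2)
  · -- the `y`-sum is a full moment
    have hu : 1 - ∑ m, μ m ≠ 0 := sub_ne_zero.2 (Ne.symm hμ)
    rw [sum_comm]
    simp only [← mul_sum, sum_comp_smul_add (fun v => W v ^ β) hu, ← sum_mul,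
      sum_prod_rpow_eq_prod_moment]
    refine le_add_of_le_of_nonneg ?_ (by positivity)
    calc (∏ m, moment W (b m)) * moment W β
        ≤ Q ^ (-((∑ m, (b m - 1)) * t)) * Q ^ (-((β - 1) * t)) :=
          mul_le_mul (hdec.prod_le hW hQ (fun m _ => hb m) fun m _ => hbA m)
            (hdec β hβ (by linarith [sum_nonneg fun m (_ : m ∈ univ) => zero_le_one.trans (hb m)]))
            (moment_nonneg hW β) (by positivity)
      _ = Q ^ (-((β + ∑ m, (b m - 1) - 1) * t)) := by
          rw [← Real.rpow_add hQ]
          ring_nf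

end SingleDependent

section LinearExtension

variable {F V : Type*} [Field F] [AddCommGroup V] [Module F V] {ι : Type*} [Fintype ι]

noncomputable def linearExtension (I : Finset ι) (lam : ι → I → F) (g : I → V) (i : ι) : V :=
  if h : i ∈ I then g ⟨i, h⟩ else ∑ m, lam i m • g m

theorem exists_linearExtension_eq (c : ι → V) :
    ∃ I : Finset ι, I.card = Module.finrank F (Submodule.span F (Set.range c)) ∧
      ∃ lam : ι → I → F, linearExtension I lam (fun m => c m) = c := by
  obtain ⟨b, -, -, hspan, hli⟩ :=
    exists_linearIndepOn_extension (K := F) (v := c) (linearIndepOn_empty F c)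
      (Set.empty_subset Set.univ)
  set I := b.toFinset
  have hrange : Set.range (fun m : I => c m) = c '' b := by
    ext; simp [I]
  have hspan_eq :
      Submodule.span F (Set.range (fun m : I => c m)) = Submodule.span F (Set.range c) := by
    rw [hrange]
    refine le_antisymm (Submodule.span_mono (Set.image_subset_range _ _)) (Submodule.span_le.2 ?_)
    rintro _ ⟨i, rfl⟩
    exact hspan ⟨i, trivial, rfl⟩
  refine ⟨I, ?_, ?_⟩
  · have hliI : LinearIndependent F (fun m : I => c m) := by
      rw [← Set.coe_toFinset b] at hli
      exact hli
    rw [← hspan_eq, finrank_span_eq_card hliI, Fintype.card_coe]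
  · have hmem : ∀ i, ∃ l : I → F, ∑ m, l m • c m = c i := fun i =>
      Submodule.mem_span_range_iff_exists_fun F |>.1 (hspan_eq ▸ Submodule.subset_span ⟨i, rfl⟩)
    choose lam hlam using hmem
    refine ⟨lam, funext fun i => ?_⟩
    unfold linearExtension
    split_ifs
    · rfl
    · exact hlam i

theorem sum_le_sum_linearExtension [Fintype F] [Fintype V] {d : ℕ} (s : Finset (ι → V))
    (hs : ∀ c ∈ s, Module.finrank F (Submodule.span F (Set.range c)) = d)
    (G : (ι → V) → ℝ) (hG : ∀ c, 0 ≤ G c) :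
    ∑ c ∈ s, G c ≤ ∑ I ∈ powersetCard d univ, ∑ lam : ι → I → F, ∑ g : I → V,
      G (linearExtension I lam g) := by
  set S := (powersetCard d univ).sigma fun I : Finset ι => (univ : Finset ((ι → I → F) × (I → V)))
  have hsub : s ⊆ S.image fun p => linearExtension p.1 p.2.1 p.2.2 := fun c hc => by
    obtain ⟨I, hI, lam, hlam⟩ := exists_linearExtension_eq (F := F) c
    exact mem_image.2 ⟨⟨I, lam, fun m => c m⟩, by simp [S, hI, hs c hc], hlam⟩
  calc ∑ c ∈ s, G c ≤ ∑ c ∈ S.image fun p => linearExtension p.1 p.2.1 p.2.2, G c :=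
        sum_le_sum_of_subset_of_nonneg hsub fun c _ _ => hG c
    _ ≤ ∑ p ∈ S, G (linearExtension p.1 p.2.1 p.2.2) := sum_image_le_of_nonneg fun c _ => hG c
    _ = _ := by simp only [S, sum_sigma, ← Fintype.sum_prod_type']

variable [Fintype V] {W : V → ℝ} {a : ι → ℝ} {Q t A : ℝ}

theorem MomentDecay.sum_sum_prod_rpow_linearExtension_le (hdec : MomentDecay W Q t A)
    (hW : ∀ v, 0 ≤ W v) (hQ : 0 < Q) (ha : ∀ i, 1 ≤ a i) (hA : ∑ i, a i = A)
    {I : Finset ι} (hI : Iᶜ.Nonempty) (lam : ι → I → F) :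
    ∑ y, ∑ g : I → V, ∏ i, W (y - linearExtension I lam g i) ^ a i
      ≤ Q ^ (-((A - I.card - 1) * t)) + Fintype.card V * Q ^ (-((A - I.card) * t)) := by
  set M := Q ^ (-((A - I.card - 1) * t)) + Fintype.card V * Q ^ (-((A - I.card) * t))
  set β := ∑ i ∈ Iᶜ, a i
  set P : V → (I → V) → ℝ := fun y g => ∏ m : I, W (y - g m) ^ a m
  have hβ : 1 ≤ β := by
    obtain ⟨i, hi⟩ := hI
    exact (ha i).trans (single_le_sum (fun i _ => zero_le_one.trans (ha i)) hi)
  have hsplit : β + ∑ m : I, a m = A := by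
    rw [← hA, sum_coe_sort I a, add_comm, sum_add_sum_compl]
  have hexp : β + ∑ m : I, (a m - 1) = A - I.card := by
    rw [sum_sub_distrib, ← add_sub_assoc, hsplit]
    simp
  -- weighted AM-GM over the entries off `I`, all raised to the common power `β`
  have amgm : ∀ y g, ∏ i, W (y - linearExtension I lam g i) ^ a i
      ≤ ∑ i ∈ Iᶜ, a i / β * (P y g * W (y - ∑ m, lam i m • g m) ^ β) := fun y g => by
    have hon : ∏ m : I, W (y - linearExtension I lam g m) ^ a m = P y g :=
      prod_congr rfl fun m _ => by simp [linearExtension]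
    have hoff : ∏ i ∈ Iᶜ, W (y - linearExtension I lam g i) ^ a i
        = ∏ i ∈ Iᶜ, W (y - ∑ m, lam i m • g m) ^ a i :=
      prod_congr rfl fun i hi => by rw [linearExtension, dif_neg (mem_compl.1 hi)]
    rw [← prod_mul_prod_compl I, ← prod_coe_sort I, hon, hoff]
    simp_rw [mul_left_comm _ (P y g), ← mul_sum]
    exact mul_le_mul_of_nonneg_left (prod_rpow_le_sum_mul_rpow
      (fun i _ => zero_le_one.trans (ha i)) (by linarith) fun i _ => hW _)
      (prod_nonneg fun m _ => Real.rpow_nonneg (hW _) _)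
  have single : ∀ i, ∑ y, ∑ g : I → V, P y g * W (y - ∑ m, lam i m • g m) ^ β ≤ M := fun i => by
    simp only [M, ← hexp]
    exact hdec.sum_sum_prod_rpow_mul_rpow_le (b := fun m : I => a m) hW hQ (fun m => ha m) hβ
      hsplit.le (lam i)
  calc ∑ y, ∑ g : I → V, ∏ i, W (y - linearExtension I lam g i) ^ a i
      ≤ ∑ y, ∑ g : I → V, ∑ i ∈ Iᶜ, a i / β * (P y g * W (y - ∑ m, lam i m • g m) ^ β) :=
        sum_le_sum fun y _ => sum_le_sum fun g _ => amgm y g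
    _ = ∑ i ∈ Iᶜ, a i / β * ∑ y, ∑ g : I → V, P y g * W (y - ∑ m, lam i m • g m) ^ β := by
        simp only [mul_sum]
        exact (sum_congr rfl fun y _ => sum_comm).trans sum_comm
    _ ≤ ∑ i ∈ Iᶜ, a i / β * M := by
        gcongr with i
        · exact div_nonneg (zero_le_one.trans (ha i)) (zero_le_one.trans hβ)
        · exact single i
    _ = _ := by rw [← sum_mul, ← sum_div, div_self (by linarith), one_mul]

theorem MomentDecay.sum_sum_prod_rpow_le [Fintype F] (hdec : MomentDecay W Q t A)
    (hW : ∀ v, 0 ≤ W v) (hQ : 0 < Q) (ha : ∀ i, 1 ≤ a i) (hA : ∑ i, a i = A) {d : ℕ}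
    (hd : d < Fintype.card ι)
    (s : Finset (ι → V)) (hs : ∀ c ∈ s, Module.finrank F (Submodule.span F (Set.range c)) = d) :
    ∑ y, ∑ c ∈ s, ∏ i, W (y - c i) ^ a i
      ≤ (Fintype.card ι).choose d * Fintype.card F ^ (d * Fintype.card ι)
        * (Q ^ (-((A - d - 1) * t)) + Fintype.card V * Q ^ (-((A - d) * t))) := by
  set M := Q ^ (-((A - d - 1) * t)) + Fintype.card V * Q ^ (-((A - d) * t))
  have hcore : ∀ I ∈ powersetCard d (univ : Finset ι), ∀ lam : ι → I → F,
      ∑ g : I → V, ∑ y, ∏ i, W (y - linearExtension I lam g i) ^ a i ≤ M := fun I hI lam => by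
    have hIcard : I.card = d := mem_powersetCard_univ.1 hI
    have hIc : Iᶜ.Nonempty := card_pos.1 (by rw [card_compl, hIcard]; omega)
    rw [sum_comm]
    simpa only [hIcard] using hdec.sum_sum_prod_rpow_linearExtension_le hW hQ ha hA hIc lam
  have hcount : ∀ I ∈ powersetCard d (univ : Finset ι),
      ∑ _lam : ι → I → F, M = Fintype.card F ^ (d * Fintype.card ι) * M := fun I hI => by
    rw [sum_const, card_univ, Fintype.card_fun, Fintype.card_fun, Fintype.card_coe,
      mem_powersetCard_univ.1 hI, nsmul_eq_mul, pow_mul]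
    push_cast
    rfl
  rw [sum_comm]
  calc ∑ c ∈ s, ∑ y, ∏ i, W (y - c i) ^ a i
      ≤ ∑ I ∈ powersetCard d univ, ∑ lam : ι → I → F, ∑ g : I → V,
          ∑ y, ∏ i, W (y - linearExtension I lam g i) ^ a i :=
        sum_le_sum_linearExtension s hs _ fun c =>
          sum_nonneg fun y _ => prod_nonneg fun i _ => Real.rpow_nonneg (hW _) _
    _ ≤ ∑ I ∈ powersetCard d univ, ∑ _lam : ι → I → F, M :=
        sum_le_sum fun I hI => sum_le_sum fun lam _ => hcore I hI lam
    _ = _ := by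
        rw [sum_congr rfl hcount, sum_const, card_powersetCard, card_univ, nsmul_eq_mul, mul_assoc]

end LinearExtension

section Numerics

variable {q : ℝ} {n k : ℕ}

theorem div_le_rpow_of_two_le (hq : 2 ≤ q) (hn : n ≠ 0) :
    (q ^ k - 1) / (q ^ n - 1) ≤ q ^ ((k : ℝ) - n + 1) := by
  have hq0 : 0 < q := by linarith
  have hden : q ^ (n - 1) ≤ q ^ n - 1 := by
    obtain ⟨m, rfl⟩ := Nat.exists_eq_succ_of_ne_zero hn
    rw [Nat.succ_sub_one, pow_succ]
    nlinarith [one_le_pow₀ (n := m) (by linarith : 1 ≤ q)]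
  rw [div_le_iff₀ (by linarith [one_le_pow₀ (n := n - 1) (by linarith : 1 ≤ q)])]
  calc q ^ k - 1 ≤ q ^ k := by linarith
    _ = q ^ ((k : ℝ) - n + 1) * q ^ (n - 1) := by
        rw [← Real.rpow_natCast, ← Real.rpow_natCast, ← Real.rpow_add hq0, Nat.cast_sub (by omega)]
        ring_nf
    _ ≤ q ^ ((k : ℝ) - n + 1) * (q ^ n - 1) := by gcongr

theorem rpow_mul_div_pow_mul_le (hq : 2 ≤ q) (hn : n ≠ 0) {A ε : ℝ} {d : ℕ} (hd : d + 1 ≤ A)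
    (hε : 0 ≤ ε) (hεk : ε * n ≤ k) :
    q ^ ((n : ℝ) * (A - 1) - k * A) * ((q ^ k - 1) / (q ^ n - 1)) ^ d
        * (q ^ (-((A - d - 1) * (n - k + ε * n))) + q ^ n * q ^ (-((A - d) * (n - k + ε * n))))
      ≤ 2 * q ^ d * q ^ (-(ε * n)) := by
  have hq0 : 0 < q := by linarith
  have hratio : ((q ^ k - 1) / (q ^ n - 1)) ^ d ≤ q ^ (((k : ℝ) - n + 1) * d) := by
    rw [Real.rpow_mul hq0.le, Real.rpow_natCast]
    exact pow_le_pow_left₀ (div_nonneg (by linarith [one_le_pow₀ (n := k) (by linarith : 1 ≤ q)])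
      (by linarith [one_le_pow₀ (n := n) (by linarith : 1 ≤ q)])) (div_le_rpow_of_two_le hq hn) d
  have hεn : 0 ≤ (A - d - 1) * (ε * n) := mul_nonneg (by linarith) (by positivity)
  calc _ ≤ q ^ ((n : ℝ) * (A - 1) - k * A) * q ^ (((k : ℝ) - n + 1) * d)
        * (q ^ (-((A - d - 1) * (n - k + ε * n)))
          + q ^ n * q ^ (-((A - d) * (n - k + ε * n)))) := by
        gcongr
    _ = q ^ ((d : ℝ) - k - (A - d - 1) * (ε * n)) + q ^ ((d : ℝ) - (A - d) * (ε * n)) := by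
        simp only [← Real.rpow_natCast q n, mul_add, ← mul_assoc, ← Real.rpow_add hq0]
        congr 2 <;> ring
    _ ≤ q ^ ((d : ℝ) - ε * n) + q ^ ((d : ℝ) - ε * n) := by
        gcongr q ^ ?_ + q ^ ?_ <;> nlinarith
    _ = 2 * q ^ d * q ^ (-(ε * n)) := by
        rw [sub_eq_add_neg, Real.rpow_add hq0, Real.rpow_natCast]
        ring

end Numerics

theorem rank_deficient_component_bound_general
    (q : ℕ)
    (F : Type) [Field F] [Fintype F] (hF : Fintype.card F = q)
    (r j : ℕ) (hr : 2 ≤ r) (hj0 : 0 < j)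
    (α' : Fin r → ℚ) (hα' : ∀ i, 1 ≤ α' i) (α : ℚ) (hα : ∑ i, α' i = α)
    (ε : ℝ) (hε : 0 < ε) :
    ∃ C : ℝ, 0 < C ∧
      ∀ (n k : ℕ), 1 ≤ k → k ≤ n →
        ∀ W : (Fin n → F) → ℝ, (∀ x, 0 ≤ W x) → (∑ x : Fin n → F, W x = 1) →
          (∑ x : Fin n → F, W x ^ ((α : ℝ))
              ≤ (q : ℝ) ^ (-(((α : ℝ) - 1) * ((n : ℝ) - (k : ℝ) + ε * (n : ℝ))))) →
          (q : ℝ) ^ ((n : ℝ) * ((α : ℝ) - 1) - (k : ℝ) * (α : ℝ)) *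
              (((q : ℝ) ^ k - 1) / ((q : ℝ) ^ n - 1)) ^ (r - j) *
              ∑ y : Fin n → F,
                ∑ c ∈ Finset.univ.filter
                    (fun c : Fin r → (Fin n → F) =>
                      Function.Injective c ∧ (∀ i, c i ≠ 0) ∧
                        Module.finrank F (Submodule.span F (Set.range c)) = r - j),
                  ∏ i, W (y - c i) ^ ((α' i : ℝ))
            ≤ C * (q : ℝ) ^ (-(ε * (n : ℝ))) := by
  have hq : (2 : ℝ) ≤ q := by rw [← hF]; exact_mod_cast Fintype.one_lt_card
  have ha : ∀ i, (1 : ℝ) ≤ α' i := fun i => by exact_mod_cast hα' i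
  have hA : ∑ i, (α' i : ℝ) = α := by exact_mod_cast hα
  have hrA : (r : ℝ) ≤ α :=
    calc (r : ℝ) = ∑ _i : Fin r, (1 : ℝ) := by simp
      _ ≤ ∑ i, (α' i : ℝ) := sum_le_sum fun i _ => ha i
      _ = α := hA
  have hA1 : (1 : ℝ) < α := by
    have : (2 : ℝ) ≤ r := by exact_mod_cast hr
    linarith only [this, hrA]
  have hd : ((r - j : ℕ) : ℝ) + 1 ≤ α := le_trans (by exact_mod_cast (by omega : r - j + 1 ≤ r)) hrA
  refine ⟨2 * (r.choose (r - j) : ℝ) * (q : ℝ) ^ ((r - j) * r) * (q : ℝ) ^ (r - j),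
    by have := Nat.choose_pos (n := r) (k := r - j) (by omega); positivity, ?_⟩
  intro n k hk hkn W hW h1 hrate
  have hdec := MomentDecay.of_moment_le hW h1 (by positivity) hrate
  have hεk : ε * n ≤ k := by
    have := le_of_moment_le_rpow hW h1 (by linarith) hA1 (N := n)
      (by simp [hF, Real.rpow_natCast]) hrate
    linarith
  have htuples := hdec.sum_sum_prod_rpow_le hW (by positivity) ha hA (d := r - j)
    (by simp; omega) (univ.filter fun c : Fin r → Fin n → F => Function.Injective c ∧
      (∀ i, c i ≠ 0) ∧ Module.finrank F (Submodule.span F (Set.range c)) = r - j)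
    fun c hc => (mem_filter.1 hc).2.2.2
  simp only [Fintype.card_fin, Fintype.card_fun, hF, Nat.cast_pow] at htuples
  have hbound := rpow_mul_div_pow_mul_le hq (by omega) hd hε.le hεk
  have hratio : 0 ≤ ((q : ℝ) ^ k - 1) / ((q : ℝ) ^ n - 1) :=
    div_nonneg (sub_nonneg.2 (one_le_pow₀ (by linarith))) (sub_nonneg.2 (one_le_pow₀ (by linarith)))
  refine (mul_le_mul_of_nonneg_left htuples (by positivity)).trans ?_
  linarith [mul_le_mul_of_nonneg_left hbound
    (by positivity : (0 : ℝ) ≤ r.choose (r - j) * (q : ℝ) ^ ((r - j) * r))]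

/-- Lemma 3.3 (key component estimate): for fixed `r`, `0 < j < r`, rational
exponents `α_i ≥ 1` summing to `α`, and every `ε > 0`, there is a constant
`C > 0` such that for all `1 ≤ k ≤ n` and every PMF `W` on `𝔽_q^n` satisfying
the rate condition `∑_x W(x)^α ≤ q^{-(α-1)(n-k+εn)}`, the contribution of
rank-`(r-j)` tuples to the smoothing bound is at most `C · q^{-εn}`. -/
theorem rank_deficient_component_bound
    (q : ℕ) (hq : IsPrimePow q)
    (F : Type) [Field F] [Fintype F] (hF : Fintype.card F = q)
    (r j : ℕ) (hr : 2 ≤ r) (hj0 : 0 < j) (hjr : j < r)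
    (α' : Fin r → ℚ) (hα' : ∀ i, 1 ≤ α' i) (α : ℚ) (hα : ∑ i, α' i = α)
    (ε : ℝ) (hε : 0 < ε) :
    ∃ C : ℝ, 0 < C ∧
      ∀ (n k : ℕ), 1 ≤ k → k ≤ n →
        ∀ W : (Fin n → F) → ℝ, (∀ x, 0 ≤ W x) → (∑ x : Fin n → F, W x = 1) →
          (∑ x : Fin n → F, W x ^ ((α : ℝ))
              ≤ (q : ℝ) ^ (-(((α : ℝ) - 1) * ((n : ℝ) - (k : ℝ) + ε * (n : ℝ))))) →
          (q : ℝ) ^ ((n : ℝ) * ((α : ℝ) - 1) - (k : ℝ) * (α : ℝ)) *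
              (((q : ℝ) ^ k - 1) / ((q : ℝ) ^ n - 1)) ^ (r - j) *
              ∑ y : Fin n → F,
                ∑ c ∈ Finset.univ.filter
                    (fun c : Fin r → (Fin n → F) =>
                      Function.Injective c ∧ (∀ i, c i ≠ 0) ∧
                        Module.finrank F (Submodule.span F (Set.range c)) = r - j),
                  ∏ i, W (y - c i) ^ ((α' i : ℝ))
            ≤ C * (q : ℝ) ^ (-(ε * (n : ℝ))) :=
  rank_deficient_component_bound_general q F hF r j hr hj0 α' hα' α hα ε hε
end

section
/- Let q be a prime power, let 1 ≤ k ≤ n be integers, let α ∈ (1,2) be real, and let W be a probability mass function on 𝔽_q^n. Then the uniform average over all k-dimensional 𝔽_q-linear subspaces C of 𝔽_q^n satisfies E_C [ q^{n(α−1)−kα} · ∑_{y ∈ 𝔽_q^n} ( ∑_{c ∈ C} W(y − c) )^α ] ≤ q^{(α−1)(n−k)} · ∑_{x ∈ 𝔽_q^n} W(x)^α + 1. In particular, if ε > 0 and ∑_{x} W(x)^α ≤ q^{−(α−1)(n−k+εn)}, then the average is at most q^{−(α−1)εn} + 1. -/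
/-!
Write `f_C(y) = ∑_{c ∈ C} W(y - c)`. Since `t ↦ t^(α-1)` is subadditive for `α ≤ 2`,
`f^α = ∑_c W(y-c) f^(α-1) ≤ ∑_c W(y-c)^α + ∑_c W(y-c) (f - W(y-c))^(α-1)`, and the first part
sums to `|C| ∑ W^α`. By Hölder (concavity of `t^(α-1)`), the average over `C` of the second part
is bounded by the same sum with exponent `1`, which is `|C| ∑_{0 ≠ d ∈ C} ∑_y W(y) W(y-d)`.
All nonzero vectors are equivalent under `GL(V)`, so double counting shows that a fixed `d ≠ 0`
lies in a fraction at most `q^k / q^n` of the `k`-dimensional subspaces; together with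
`∑_d ∑_y W(y) W(y-d) = 1` this produces the `+ 1`.
-/

open scoped Classical
open Finset

theorem rpow_sum_le_sum_rpow_add_sum_mul_rpow {ι : Type*} (s : Finset ι) {w : ι → ℝ}
    (hw : ∀ i ∈ s, 0 ≤ w i) {α : ℝ} (hα1 : 1 ≤ α) (hα2 : α ≤ 2) :
    (∑ i ∈ s, w i) ^ α
      ≤ ∑ i ∈ s, w i ^ α + ∑ i ∈ s, w i * (∑ j ∈ s, w j - w i) ^ (α - 1) := by
  set t := ∑ j ∈ s, w j
  have ht : 0 ≤ t := sum_nonneg hw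
  have rpow_eq_mul {x : ℝ} (hx : 0 ≤ x) : x ^ α = x * x ^ (α - 1) := by
    rw [← Real.rpow_one_add' hx (by linarith), add_sub_cancel]
  rw [rpow_eq_mul ht, sum_mul, ← sum_add_distrib]
  refine sum_le_sum fun i hi => ?_
  have hwt : w i ≤ t := single_le_sum hw hi
  have hsub : t ^ (α - 1) ≤ w i ^ (α - 1) + (t - w i) ^ (α - 1) := by
    simpa using Real.rpow_add_le_add_rpow (hw i hi) (sub_nonneg.2 hwt) (by linarith) (by linarith)
  calc w i * t ^ (α - 1) ≤ w i * (w i ^ (α - 1) + (t - w i) ^ (α - 1)) :=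
        mul_le_mul_of_nonneg_left hsub (hw i hi)
    _ = w i ^ α + w i * (t - w i) ^ (α - 1) := by rw [rpow_eq_mul (hw i hi), mul_add]

theorem sum_mul_rpow_le_of_nonneg {ι : Type*} (s : Finset ι) {p : ℝ} (hp0 : 0 < p) (hp1 : p ≤ 1)
    {w x : ι → ℝ} (hw : ∀ i ∈ s, 0 ≤ w i) (hx : ∀ i ∈ s, 0 ≤ x i) :
    ∑ i ∈ s, w i * x i ^ p ≤ (∑ i ∈ s, w i) ^ (1 - p) * (∑ i ∈ s, w i * x i) ^ p := by
  have h := Real.inner_le_weight_mul_Lp_of_nonneg s (one_le_inv_iff₀.2 ⟨hp0, hp1⟩)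
    (fun i => max (w i) 0) (fun i => max (x i) 0 ^ p) (fun i => le_max_right _ _)
    (fun i => Real.rpow_nonneg (le_max_right _ _) _)
  simp only [inv_inv, ← Real.rpow_mul (le_max_right _ _), mul_inv_cancel₀ hp0.ne',
    Real.rpow_one] at h
  have hw' : ∀ i ∈ s, max (w i) 0 = w i := fun i hi => max_eq_left (hw i hi)
  have hx' : ∀ i ∈ s, max (x i) 0 = x i := fun i hi => max_eq_left (hx i hi)
  have hwx : ∀ i ∈ s, max (w i) 0 * max (x i) 0 = w i * x i := fun i hi => by
    rw [hw' i hi, hx' i hi]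
  calc ∑ i ∈ s, w i * x i ^ p = ∑ i ∈ s, max (w i) 0 * max (x i) 0 ^ p :=
        sum_congr rfl fun i hi => by rw [hw' i hi, hx' i hi]
    _ ≤ _ := h
    _ = _ := by rw [sum_congr rfl hw', sum_congr rfl hwx]

section Smoothing

variable {V : Type*} [AddCommGroup V]

-- `|S|` times the PMF of `U_S + N` at `y`, for `N ∼ W`.
noncomputable def smoothing (W : V → ℝ) (S : Finset V) (y : V) : ℝ := ∑ c ∈ S, W (y - c)

theorem le_smoothing {W : V → ℝ} (hW : ∀ x, 0 ≤ W x) {S : Finset V} {c : V} (hc : c ∈ S)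
    (y : V) : W (y - c) ≤ smoothing W S y :=
  single_le_sum (fun c _ => hW (y - c)) hc

variable [Fintype V]

noncomputable def smoothingCrossSum (β : ℝ) (W : V → ℝ) (S : Finset V) : ℝ :=
  ∑ y, ∑ c ∈ S, W (y - c) * (smoothing W S y - W (y - c)) ^ β

def autocorrelation (W : V → ℝ) (d : V) : ℝ := ∑ y, W y * W (y - d)

theorem smoothingCrossSum_nonneg {W : V → ℝ} (hW : ∀ x, 0 ≤ W x) (β : ℝ) (S : Finset V) :
    0 ≤ smoothingCrossSum β W S :=
  sum_nonneg fun y _ => sum_nonneg fun _ hc =>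
    mul_nonneg (hW _) (Real.rpow_nonneg (sub_nonneg.2 (le_smoothing hW hc y)) _)

theorem sum_sum_sub_eq_card_mul (S : Finset V) (g : V → ℝ) :
    ∑ y, ∑ c ∈ S, g (y - c) = #S * ∑ x, g x := by
  rw [sum_comm, ← nsmul_eq_mul, ← sum_const]
  exact sum_congr rfl fun c _ => Fintype.sum_equiv (Equiv.subRight c) _ _ fun _ => rfl

theorem sum_smoothing_rpow_le {W : V → ℝ} (hW : ∀ x, 0 ≤ W x) (S : Finset V) {α : ℝ}
    (hα1 : 1 ≤ α) (hα2 : α ≤ 2) :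
    ∑ y, smoothing W S y ^ α ≤ #S * ∑ x, W x ^ α + smoothingCrossSum (α - 1) W S := by
  rw [← sum_sum_sub_eq_card_mul, smoothingCrossSum, ← sum_add_distrib]
  exact sum_le_sum fun y _ =>
    rpow_sum_le_sum_rpow_add_sum_mul_rpow S (fun c _ => hW (y - c)) hα1 hα2

theorem sum_mul_sub_eq_autocorrelation (W : V → ℝ) (c c' : V) :
    ∑ y, W (y - c) * W (y - c') = autocorrelation W (c' - c) :=
  Fintype.sum_equiv (Equiv.subRight c) _ _ fun y => by simp [sub_sub_sub_cancel_right]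

theorem sum_autocorrelation (W : V → ℝ) : ∑ d, autocorrelation W d = (∑ x, W x) ^ 2 := by
  have shift (y : V) : ∑ d, W (y - d) = ∑ x, W x :=
    Fintype.sum_equiv (Equiv.subLeft y) _ _ fun _ => rfl
  simp only [autocorrelation]
  rw [sum_comm, sq, sum_mul]
  simp only [← mul_sum, shift]

theorem sum_erase_sub_eq (H : AddSubgroup V) {c : V} (hc : c ∈ H) (g : V → ℝ) :
    ∑ c' ∈ ({x | x ∈ H} : Finset V).erase c, g (c' - c)
      = ∑ d ∈ ({d | d ∈ H ∧ d ≠ 0} : Finset V), g d := by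
  refine sum_nbij' (· - c) (· + c) (fun c' hc' => ?_) (fun d hd => ?_) (by simp) (by simp)
    fun _ _ => rfl
  · simp only [mem_erase, mem_filter, mem_univ, true_and] at hc' ⊢
    exact ⟨H.sub_mem hc'.2 hc, sub_ne_zero.2 hc'.1⟩
  · simp only [mem_erase, mem_filter, mem_univ, true_and] at hd ⊢
    exact ⟨by simpa using hd.2, H.add_mem hd.1 hc⟩

theorem smoothingCrossSum_one_eq (W : V → ℝ) (H : AddSubgroup V) :
    smoothingCrossSum 1 W {c | c ∈ H}
      = #{c | c ∈ H} * ∑ d ∈ ({d | d ∈ H ∧ d ≠ 0} : Finset V), autocorrelation W d := by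
  set S : Finset V := {c | c ∈ H}
  have hdiff (y c : V) (hc : c ∈ S) :
      smoothing W S y - W (y - c) = ∑ c' ∈ S.erase c, W (y - c') := by
    rw [smoothing, sum_erase_eq_sub hc]
  calc smoothingCrossSum 1 W S = ∑ c ∈ S, ∑ c' ∈ S.erase c, ∑ y, W (y - c) * W (y - c') := by
        simp only [smoothingCrossSum, Real.rpow_one]
        rw [sum_comm]
        refine sum_congr rfl fun c hc => ?_
        simp_rw [hdiff _ c hc, mul_sum]
        exact sum_comm
    _ = ∑ c ∈ S, ∑ d ∈ ({d | d ∈ H ∧ d ≠ 0} : Finset V), autocorrelation W d := by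
        refine sum_congr rfl fun c hc => ?_
        simp only [sum_mul_sub_eq_autocorrelation]
        exact sum_erase_sub_eq H (by simpa [S] using hc) _
    _ = _ := by rw [sum_const, nsmul_eq_mul]

theorem sum_smoothingCrossSum_le {κ : Type*} (K : Finset κ) (S : κ → Finset V) {W : V → ℝ}
    (hW : ∀ x, 0 ≤ W x) (hW1 : ∑ x, W x = 1) {β : ℝ} (hβ0 : 0 < β) (hβ1 : β ≤ 1) :
    ∑ i ∈ K, smoothingCrossSum β W (S i)
      ≤ (∑ i ∈ K, (#(S i) : ℝ)) ^ (1 - β) * (∑ i ∈ K, smoothingCrossSum 1 W (S i)) ^ β := by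
  set I : Finset (Σ _ : κ, V × V) := K.sigma fun i => univ ×ˢ S i
  have hI (g : (Σ _ : κ, V × V) → ℝ) :
      ∑ j ∈ I, g j = ∑ i ∈ K, ∑ y : V, ∑ c ∈ S i, g ⟨i, y, c⟩ := by
    rw [sum_sigma]
    exact sum_congr rfl fun i _ => sum_product univ (S i) _
  have h := sum_mul_rpow_le_of_nonneg I hβ0 hβ1 (w := fun j => W (j.2.1 - j.2.2))
    (x := fun j => smoothing W (S j.1) j.2.1 - W (j.2.1 - j.2.2)) (fun j _ => hW _)
    fun j hj => sub_nonneg.2 <| le_smoothing hW (mem_product.1 (mem_sigma.1 hj).2).2 _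
  rw [hI, hI, hI] at h
  simpa only [smoothingCrossSum, Real.rpow_one, sum_sum_sub_eq_card_mul, hW1, mul_one] using h

end Smoothing

section Subspaces

variable {F V : Type*} [Field F] [AddCommGroup V] [Module F V]

theorem exists_linearEquiv_apply_eq {d d' : V} (hd : d ≠ 0) (hd' : d' ≠ 0) :
    ∃ e : V ≃ₗ[F] V, e d = d' := by
  obtain ⟨e, he⟩ := Submodule.exists_linearEquiv_restrict_eq
    ((LinearEquiv.coord F V d hd).trans (LinearEquiv.toSpanNonzeroSingleton F V d' hd'))
  refine ⟨e, ?_⟩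
  simpa [LinearEquiv.coord_self] using (he ⟨d, Submodule.mem_span_singleton_self d⟩).symm

variable [Fintype V]

variable (F V) in
noncomputable def subspacesOfFinrank (k : ℕ) : Finset (Submodule F V) :=
  {C | Module.finrank F C = k}

theorem card_filter_mem_subspacesOfFinrank_eq (k : ℕ) {d d' : V} (hd : d ≠ 0) (hd' : d' ≠ 0) :
    #{C ∈ subspacesOfFinrank F V k | d ∈ C} = #{C ∈ subspacesOfFinrank F V k | d' ∈ C} := by
  have map_mem (e : V ≃ₗ[F] V) {a b : V} (hab : e a = b) (C : Submodule F V)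
      (hC : C ∈ {C ∈ subspacesOfFinrank F V k | a ∈ C}) :
      C.map (e : V →ₗ[F] V) ∈ {C ∈ subspacesOfFinrank F V k | b ∈ C} := by
    simp only [subspacesOfFinrank, mem_filter, mem_univ, true_and] at hC ⊢
    exact ⟨hC.1 ▸ LinearEquiv.finrank_map_eq e C, hab ▸ Submodule.mem_map_of_mem hC.2⟩
  obtain ⟨e, he⟩ := exists_linearEquiv_apply_eq (F := F) hd hd'
  refine card_nbij' (Submodule.map (e : V →ₗ[F] V)) (Submodule.map (e.symm : V →ₗ[F] V))
    (map_mem e he) (map_mem e.symm (e.symm_apply_eq.2 he.symm)) (fun C _ => ?_) (fun C _ => ?_)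
  · ext x; simp [Submodule.mem_map_equiv]
  · ext x; simp [Submodule.mem_map_equiv]

theorem card_filter_mem_submodule [Fintype F] (C : Submodule F V) :
    #{x | x ∈ C} = Fintype.card F ^ Module.finrank F C := by
  rw [← Fintype.card_subtype]
  exact Module.card_eq_pow_finrank

theorem card_sub_one_mul_card_filter_mem_eq [Fintype F] (k : ℕ) {d : V} (hd : d ≠ 0) :
    (Fintype.card V - 1) * #{C ∈ subspacesOfFinrank F V k | d ∈ C}
      = #(subspacesOfFinrank F V k) * (Fintype.card F ^ k - 1) := by
  set 𝒞 := subspacesOfFinrank F V k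
  have hconst : ∀ d' ∈ ({x | x ≠ 0} : Finset V),
      #(𝒞.bipartiteAbove (· ∈ ·) d') = #{C ∈ 𝒞 | d ∈ C} :=
    fun d' hd' => card_filter_mem_subspacesOfFinrank_eq k (by simpa using hd') hd
  have hpoints : ∀ C ∈ 𝒞, #(({x | x ≠ 0} : Finset V).bipartiteBelow (· ∈ ·) C)
      = Fintype.card F ^ k - 1 := fun C hC => by
    rw [bipartiteBelow, filter_filter, ← (mem_filter.1 hC).2, ← card_filter_mem_submodule,
      ← card_erase_of_mem (by simp : (0 : V) ∈ ({x | x ∈ C} : Finset V))]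
    congr 1; ext x; simp [and_comm]
  have h := sum_card_bipartiteAbove_eq_sum_card_bipartiteBelow (s := ({x | x ≠ 0} : Finset V))
    (t := 𝒞) (r := (· ∈ ·))
  rwa [sum_congr rfl hconst, sum_congr rfl hpoints, sum_const, sum_const, smul_eq_mul,
    smul_eq_mul, filter_ne', card_erase_of_mem (mem_univ _), card_univ] at h

theorem card_filter_mem_mul_card_le [Fintype F] (k : ℕ) {d : V} (hd : d ≠ 0) :
    #{C ∈ subspacesOfFinrank F V k | d ∈ C} * Fintype.card V
      ≤ #(subspacesOfFinrank F V k) * Fintype.card F ^ k := by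
  set N := #(subspacesOfFinrank F V k)
  set M := #{C ∈ subspacesOfFinrank F V k | d ∈ C}
  have hM : M ≤ N := card_filter_le _ _
  have hV : 1 ≤ Fintype.card V := Fintype.card_pos
  have hq : 1 ≤ Fintype.card F ^ k := Nat.one_le_pow _ _ Fintype.card_pos
  calc M * Fintype.card V = (Fintype.card V - 1) * M + M := by
        rw [Nat.sub_mul, one_mul, Nat.sub_add_cancel (Nat.le_mul_of_pos_left M hV), mul_comm]
    _ ≤ N * (Fintype.card F ^ k - 1) + N := by
        rw [card_sub_one_mul_card_filter_mem_eq k hd]; exact Nat.add_le_add_left hM _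
    _ = N * Fintype.card F ^ k := by
        rw [Nat.mul_sub_one, Nat.sub_add_cancel (Nat.le_mul_of_pos_right _ hq)]

end Subspaces

section SmoothingRandomCode

variable {F V : Type*} [Field F] [Fintype F] [AddCommGroup V] [Module F V] [Fintype V]

theorem sum_smoothingCrossSum_one_le (k : ℕ) {W : V → ℝ} (hW : ∀ x, 0 ≤ W x)
    (hW1 : ∑ x, W x = 1) :
    ∑ C ∈ subspacesOfFinrank F V k, smoothingCrossSum 1 W {x | x ∈ C}
      ≤ #(subspacesOfFinrank F V k) * (Fintype.card F : ℝ) ^ k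
        * ((Fintype.card F : ℝ) ^ k / Fintype.card V) := by
  set 𝒞 := subspacesOfFinrank F V k
  set q : ℝ := (Fintype.card F : ℝ) with hq
  have hV : (0 : ℝ) < Fintype.card V := by exact_mod_cast Fintype.card_pos
  have hG : ∀ d, 0 ≤ autocorrelation W d := fun d => sum_nonneg fun y _ => mul_nonneg (hW y) (hW _)
  have hA : ∀ C ∈ 𝒞, smoothingCrossSum 1 W {x | x ∈ C}
      = q ^ k * ∑ d ∈ ({d | d ∈ C ∧ d ≠ 0} : Finset V), autocorrelation W d := fun C hC => by
    have h := smoothingCrossSum_one_eq W C.toAddSubgroup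
    simp only [Submodule.mem_toAddSubgroup] at h
    rw [h, card_filter_mem_submodule, (mem_filter.1 hC).2]
    push_cast; rfl
  have hM : ∀ d ∈ ({d | d ≠ 0} : Finset V), (#{C ∈ 𝒞 | d ∈ C} : ℝ) ≤ #𝒞 * q ^ k / Fintype.card V :=
    fun d hd => by
      rw [le_div_iff₀ hV, hq]
      exact_mod_cast card_filter_mem_mul_card_le k (by simpa using hd)
  calc ∑ C ∈ 𝒞, smoothingCrossSum 1 W {x | x ∈ C}
      = q ^ k * ∑ d ∈ ({d | d ≠ 0} : Finset V), #{C ∈ 𝒞 | d ∈ C} * autocorrelation W d := by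
        rw [sum_congr rfl hA, ← mul_sum]
        congr 1
        rw [sum_comm' (t' := {d | d ≠ 0}) (s' := fun d => {C ∈ 𝒞 | d ∈ C}) (by simp; tauto)]
        simp only [sum_const, nsmul_eq_mul]
    _ ≤ q ^ k * ∑ d ∈ ({d | d ≠ 0} : Finset V),
          #𝒞 * q ^ k / Fintype.card V * autocorrelation W d := by
        gcongr with d hd
        · exact hG d
        · exact hM d hd
    _ ≤ q ^ k * (#𝒞 * q ^ k / Fintype.card V * ∑ d, autocorrelation W d) := by
        rw [← mul_sum]
        gcongr q ^ k * (_ * ?_)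
        exact sum_le_univ_sum_of_nonneg hG
    _ = _ := by rw [sum_autocorrelation, hW1]; ring

theorem average_sum_smoothing_rpow_le (k : ℕ) {W : V → ℝ} (hW : ∀ x, 0 ≤ W x)
    (hW1 : ∑ x, W x = 1) {α : ℝ} (hα1 : 1 < α) (hα2 : α ≤ 2) :
    1 / #(subspacesOfFinrank F V k)
        * ∑ C ∈ subspacesOfFinrank F V k, ∑ y, smoothing W {x | x ∈ C} y ^ α
      ≤ (Fintype.card F : ℝ) ^ k * ∑ x, W x ^ α
        + (Fintype.card F : ℝ) ^ k * ((Fintype.card F : ℝ) ^ k / Fintype.card V) ^ (α - 1) := by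
  set 𝒞 := subspacesOfFinrank F V k
  set q : ℝ := (Fintype.card F : ℝ)
  have hcard : ∀ C ∈ 𝒞, (#{x | x ∈ C} : ℝ) = q ^ k := fun C hC => by
    rw [card_filter_mem_submodule, (mem_filter.1 hC).2]
    push_cast; rfl
  have hcross := sum_smoothingCrossSum_le 𝒞 (fun C => {x | x ∈ C}) hW hW1 (β := α - 1)
    (by linarith) (by linarith)
  rw [sum_congr rfl hcard, sum_const, nsmul_eq_mul] at hcross
  have hN : (0 : ℝ) ≤ #𝒞 * q ^ k := by positivity
  have hpow : 0 ≤ ∑ x, W x ^ α := sum_nonneg fun x _ => Real.rpow_nonneg (hW x) _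
  rw [one_div_mul_eq_div]
  refine div_le_of_le_mul₀ (by positivity) (by positivity) ?_
  calc ∑ C ∈ 𝒞, ∑ y, smoothing W {x | x ∈ C} y ^ α
      ≤ ∑ C ∈ 𝒞, (q ^ k * ∑ x, W x ^ α + smoothingCrossSum (α - 1) W {x | x ∈ C}) :=
        sum_le_sum fun C hC => hcard C hC ▸ sum_smoothing_rpow_le hW _ hα1.le hα2
    _ = #𝒞 * q ^ k * ∑ x, W x ^ α + ∑ C ∈ 𝒞, smoothingCrossSum (α - 1) W {x | x ∈ C} := by
        rw [sum_add_distrib, sum_const, nsmul_eq_mul, mul_assoc]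
    _ ≤ #𝒞 * q ^ k * ∑ x, W x ^ α
          + (#𝒞 * q ^ k) ^ (1 - (α - 1))
            * (#𝒞 * q ^ k * (q ^ k / Fintype.card V)) ^ (α - 1) := by
        gcongr
        refine hcross.trans ?_
        gcongr
        · exact sum_nonneg fun C _ => smoothingCrossSum_nonneg hW 1 _
        exact sum_smoothingCrossSum_one_le (F := F) k hW hW1
    _ = _ := by
        rw [Real.mul_rpow hN (by positivity), ← mul_assoc, ← Real.rpow_add' hN (by norm_num),
          sub_add_cancel, Real.rpow_one]
        ring

end SmoothingRandomCode

theorem smoothing_random_linear_code_alpha_lt_two_general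
    (q n k : ℕ)
    (F : Type) [Field F] [Fintype F] (hF : Fintype.card F = q)
    (α : ℝ) (hα1 : 1 < α) (hα2 : α < 2)
    (W : (Fin n → F) → ℝ) (hW : ∀ x, 0 ≤ W x) (hW1 : ∑ x : Fin n → F, W x = 1) :
    ((1 / ((Finset.univ.filter
        (fun C : Submodule F (Fin n → F) => Module.finrank F C = k)).card : ℝ)) *
      ∑ C ∈ Finset.univ.filter
          (fun C : Submodule F (Fin n → F) => Module.finrank F C = k),
        (q : ℝ) ^ ((n : ℝ) * (α - 1) - (k : ℝ) * α) *
          ∑ y : Fin n → F,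
            (∑ c ∈ Finset.univ.filter (fun c : Fin n → F => c ∈ C), W (y - c)) ^ α
      ≤ (q : ℝ) ^ (((α - 1) * ((n : ℝ) - (k : ℝ)))) *
          (∑ x : Fin n → F, W x ^ α) + 1) ∧
    (∀ ε : ℝ, 0 < ε →
      (∑ x : Fin n → F, W x ^ α
          ≤ (q : ℝ) ^ (-((α - 1) * ((n : ℝ) - (k : ℝ) + ε * (n : ℝ))))) →
      (1 / ((Finset.univ.filter
          (fun C : Submodule F (Fin n → F) => Module.finrank F C = k)).card : ℝ)) *
        ∑ C ∈ Finset.univ.filter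
            (fun C : Submodule F (Fin n → F) => Module.finrank F C = k),
          (q : ℝ) ^ ((n : ℝ) * (α - 1) - (k : ℝ) * α) *
            ∑ y : Fin n → F,
              (∑ c ∈ Finset.univ.filter (fun c : Fin n → F => c ∈ C), W (y - c)) ^ α
        ≤ (q : ℝ) ^ (-((α - 1) * ε * (n : ℝ))) + 1) := by
  have hq0 : (0 : ℝ) < q := by rw [← hF]; exact_mod_cast Fintype.card_pos
  have hbound := average_sum_smoothing_rpow_le (F := F) (V := Fin n → F) k hW hW1 hα1 hα2.le
  rw [hF, Fintype.card_fun, Fintype.card_fin, hF, Nat.cast_pow] at hbound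
  have hgain : (q : ℝ) ^ ((n : ℝ) * (α - 1) - k * α) * q ^ k = q ^ ((α - 1) * ((n : ℝ) - k)) := by
    rw [← Real.rpow_natCast, ← Real.rpow_add hq0]; ring_nf
  have hcross :
      (q : ℝ) ^ ((n : ℝ) * (α - 1) - k * α) * (q ^ k * (q ^ k / q ^ n) ^ (α - 1)) = 1 := by
    rw [← mul_assoc, hgain, ← Real.rpow_natCast, ← Real.rpow_natCast, ← Real.rpow_sub hq0,
      ← Real.rpow_mul hq0.le, ← Real.rpow_add hq0]
    ring_nf; exact Real.rpow_zero _
  have hmain : 1 / (#(subspacesOfFinrank F (Fin n → F) k) : ℝ)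
      * ∑ C ∈ subspacesOfFinrank F (Fin n → F) k,
        (q : ℝ) ^ ((n : ℝ) * (α - 1) - k * α) * ∑ y, smoothing W {x | x ∈ C} y ^ α
      ≤ (q : ℝ) ^ ((α - 1) * ((n : ℝ) - k)) * ∑ x, W x ^ α + 1 := by
    calc _ = (q : ℝ) ^ ((n : ℝ) * (α - 1) - k * α) * (1 / #(subspacesOfFinrank F (Fin n → F) k)
            * ∑ C ∈ subspacesOfFinrank F (Fin n → F) k, ∑ y, smoothing W {x | x ∈ C} y ^ α) := by
          rw [← mul_sum, mul_left_comm]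
      _ ≤ (q : ℝ) ^ ((n : ℝ) * (α - 1) - k * α)
            * (q ^ k * ∑ x, W x ^ α + q ^ k * (q ^ k / q ^ n) ^ (α - 1)) := by gcongr
      _ = _ := by rw [mul_add, ← mul_assoc, hgain, hcross]
  refine ⟨hmain, fun ε _ hrate => hmain.trans ?_⟩
  gcongr
  calc (q : ℝ) ^ ((α - 1) * ((n : ℝ) - k)) * ∑ x, W x ^ α
      ≤ q ^ ((α - 1) * ((n : ℝ) - k)) * q ^ (-((α - 1) * ((n : ℝ) - k + ε * n))) := by gcongr
    _ = q ^ (-((α - 1) * ε * n)) := by rw [← Real.rpow_add hq0]; ring_nf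

/-- Smoothing of random linear codes for Rényi parameter `α ∈ (1,2)`: the
average over all `k`-dimensional subspaces `C` of `𝔽_q^n` of the exponentiated
Rényi divergence `q^{(α-1)D_α(U_C + N ‖ U)}` is at most
`q^{(α-1)(n-k)} ∑_x W(x)^α + 1`; in particular, under the rate condition
`∑_x W(x)^α ≤ q^{-(α-1)(n-k+εn)}` it is at most `q^{-(α-1)εn} + 1`. -/
theorem smoothing_random_linear_code_alpha_lt_two
    (q n k : ℕ) (hq : IsPrimePow q) (hk : 1 ≤ k) (hkn : k ≤ n)
    (F : Type) [Field F] [Fintype F] (hF : Fintype.card F = q)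
    (α : ℝ) (hα1 : 1 < α) (hα2 : α < 2)
    (W : (Fin n → F) → ℝ) (hW : ∀ x, 0 ≤ W x) (hW1 : ∑ x : Fin n → F, W x = 1) :
    ((1 / ((Finset.univ.filter
        (fun C : Submodule F (Fin n → F) => Module.finrank F C = k)).card : ℝ)) *
      ∑ C ∈ Finset.univ.filter
          (fun C : Submodule F (Fin n → F) => Module.finrank F C = k),
        (q : ℝ) ^ ((n : ℝ) * (α - 1) - (k : ℝ) * α) *
          ∑ y : Fin n → F,
            (∑ c ∈ Finset.univ.filter (fun c : Fin n → F => c ∈ C), W (y - c)) ^ α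
      ≤ (q : ℝ) ^ (((α - 1) * ((n : ℝ) - (k : ℝ)))) *
          (∑ x : Fin n → F, W x ^ α) + 1) ∧
    (∀ ε : ℝ, 0 < ε →
      (∑ x : Fin n → F, W x ^ α
          ≤ (q : ℝ) ^ (-((α - 1) * ((n : ℝ) - (k : ℝ) + ε * (n : ℝ))))) →
      (1 / ((Finset.univ.filter
          (fun C : Submodule F (Fin n → F) => Module.finrank F C = k)).card : ℝ)) *
        ∑ C ∈ Finset.univ.filter
            (fun C : Submodule F (Fin n → F) => Module.finrank F C = k),
          (q : ℝ) ^ ((n : ℝ) * (α - 1) - (k : ℝ) * α) *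
            ∑ y : Fin n → F,
              (∑ c ∈ Finset.univ.filter (fun c : Fin n → F => c ∈ C), W (y - c)) ^ α
        ≤ (q : ℝ) ^ (-((α - 1) * ε * (n : ℝ))) + 1) :=
  smoothing_random_linear_code_alpha_lt_two_general q n k F hF α hα1 hα2 W hW hW1
end

section
/- Let t ≥ 2 be an integer, n = 2t, let α ∈ (1,2) be real, let W be a probability mass function on 𝔽_2^n, and let 𝟏 ∈ 𝔽_2^n denote the all-one vector. Let ℬ be a nonempty finite collection of t-dimensional 𝔽_2-linear subspaces C of 𝔽_2^n such that: (i) every C ∈ ℬ satisfies C = C^⊥ and contains 𝟏, and every codeword of every C ∈ ℬ has Hamming weight divisible by 4; (ii) there is an integer M with M·(2^{t−2} + 1) = |ℬ| such that every v ∈ 𝔽_2^n \ {0, 𝟏} of Hamming weight divisible by 4 belongs to exactly M members of ℬ. Then (1/|ℬ|) ∑_{C ∈ ℬ} 2^{n(α−1)−tα} ∑_{y ∈ 𝔽_2^n} ( ∑_{c ∈ C} W(y + c) )^α ≤ 2^{(α−1)t} · ∑_{x ∈ 𝔽_2^n} W(x)^α + 2^{(α−1)t} · ∑_{z ∈ 𝔽_2^n}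 W(z)·W(z + 𝟏)^{α−1} + ( 2^t/(2^{t−2} + 1) )^{α−1}. -/
/-!
Write `T_C(y) = ∑_{c ∈ C} W(y + c)`. Since `T_C^α = ∑_c W(y + c) T_C^{α-1}` and, for each `c ∈ C`,
`T_C(y)` splits as `W(y + c) + W(y + c + 𝟏) + R_C(y + c)` with `R_C(x)` the mass of
`x + (C ∖ {0, 𝟏})`, subadditivity of `r ↦ r^{α-1}` bounds `∑_y T_C(y)^α` by `|C|` times
`∑ W^α + ∑ W(z) W(z + 𝟏)^{α-1} + ∑_x W(x) R_C(x)^{α-1}`. Only the last term depends on `C`.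
By Jensen for the concave `r^{α-1}`, its average over `ℬ` is at most `(avg_C R_C(x))^{α-1}`,
and `avg_C R_C(x) ≤ M/|ℬ| = 1/(2^{t-2}+1)` because every `v ∉ {0, 𝟏}` lies in at most `M`
codes of `ℬ`: exactly `M` if `4 ∣ w(v)`, none otherwise.
-/

open scoped Classical
open Finset

section Periodization

variable {G : Type*} [AddGroup G] [Fintype G] {σ : Type*} [SetLike σ G]

lemma sum_filter_mem_add_left [AddSubgroupClass σ G] {C : σ} {c : G} (hc : c ∈ C) (f : G → ℝ) :
    ∑ v ∈ univ.filter (· ∈ C), f (c + v) = ∑ v ∈ univ.filter (· ∈ C), f v :=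
  sum_equiv (Equiv.addLeft c) (by simp [add_mem_cancel_left hc]) (fun _ _ => rfl)

lemma sum_sum_add_eq_card_mul_sum (s : Finset G) (g : G → ℝ) :
    ∑ y, ∑ c ∈ s, g (y + c) = #s * ∑ x, g x := by
  rw [sum_comm, ← nsmul_eq_mul, ← sum_const]
  exact sum_congr rfl fun c _ => Fintype.sum_equiv (Equiv.addRight c) _ _ fun _ => rfl

noncomputable def tailMass (C : σ) (e : G) (W : G → ℝ) (x : G) : ℝ :=
  ∑ v ∈ ((univ.filter (· ∈ C)).erase 0).erase e, W (x + v)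

lemma tailMass_nonneg (C : σ) (e : G) {W : G → ℝ} (hW : ∀ x, 0 ≤ W x) (x : G) :
    0 ≤ tailMass C e W x :=
  sum_nonneg fun _ _ => hW _

lemma sum_filter_mem_eq_add_add_tailMass [AddSubgroupClass σ G] {C : σ} {e c : G} (he : e ≠ 0)
    (heC : e ∈ C) (hc : c ∈ C) (W : G → ℝ) (y : G) :
    ∑ c' ∈ univ.filter (· ∈ C), W (y + c') =
      W (y + c) + W (y + c + e) + tailMass C e W (y + c) := by
  have h0 : (0 : G) ∈ univ.filter (· ∈ C) := by simp [zero_mem C]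
  have he' : e ∈ (univ.filter (· ∈ C)).erase 0 := by simp [he, heC]
  rw [← sum_filter_mem_add_left hc, ← add_sum_erase _ _ h0, ← add_sum_erase _ _ he', tailMass]
  simp only [add_zero, add_assoc]

lemma sum_rpow_sum_filter_mem_le [AddSubgroupClass σ G] {C : σ} {e : G} (he : e ≠ 0)
    (heC : e ∈ C) {W : G → ℝ} (hW : ∀ x, 0 ≤ W x) {α : ℝ} (hα1 : 1 ≤ α) (hα2 : α ≤ 2) :
    ∑ y, (∑ c ∈ univ.filter (· ∈ C), W (y + c)) ^ α ≤
      #(univ.filter (· ∈ C)) * (∑ x, W x ^ α + ∑ x, W x * W (x + e) ^ (α - 1)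
        + ∑ x, W x * tailMass C e W x ^ (α - 1)) := by
  have hq0 : 0 ≤ α - 1 := by linarith
  have hq1 : α - 1 ≤ 1 := by linarith
  have hpow : ∀ a : ℝ, 0 ≤ a → a ^ α = a * a ^ (α - 1) := fun a ha => by
    rw [← Real.rpow_one_add' ha (by linarith), add_sub_cancel]
  set g : G → ℝ := fun x => W x ^ (α - 1) + W (x + e) ^ (α - 1) + tailMass C e W x ^ (α - 1)
  have hpoint : ∀ y, (∑ c ∈ univ.filter (· ∈ C), W (y + c)) ^ α ≤
      ∑ c ∈ univ.filter (· ∈ C), W (y + c) * g (y + c) := fun y => by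
    rw [hpow _ (sum_nonneg fun _ _ => hW _), sum_mul]
    refine sum_le_sum fun c hc => mul_le_mul_of_nonneg_left ?_ (hW _)
    rw [sum_filter_mem_eq_add_add_tailMass he heC (mem_filter.1 hc).2]
    have hR := tailMass_nonneg C e hW (y + c)
    calc (W (y + c) + W (y + c + e) + tailMass C e W (y + c)) ^ (α - 1)
        ≤ (W (y + c) + W (y + c + e)) ^ (α - 1) + tailMass C e W (y + c) ^ (α - 1) :=
          Real.rpow_add_le_add_rpow (add_nonneg (hW _) (hW _)) hR hq0 hq1
      _ ≤ g (y + c) := by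
          simp only [g]
          gcongr
          exact Real.rpow_add_le_add_rpow (hW _) (hW _) hq0 hq1
  calc ∑ y, (∑ c ∈ univ.filter (· ∈ C), W (y + c)) ^ α
      ≤ ∑ y, ∑ c ∈ univ.filter (· ∈ C), W (y + c) * g (y + c) := sum_le_sum fun y _ => hpoint y
    _ = #(univ.filter (· ∈ C)) * ∑ x, W x * g x :=
        sum_sum_add_eq_card_mul_sum _ fun x => W x * g x
    _ = _ := by
        congr 1
        simp only [g, mul_add, sum_add_distrib, ← hpow _ (hW _)]

lemma sum_tailMass_le {ℬ : Finset σ} {e : G} {M : ℕ}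
    (hM : ∀ v, v ≠ 0 → v ≠ e → #(ℬ.filter (v ∈ ·)) ≤ M)
    {W : G → ℝ} (hW : ∀ x, 0 ≤ W x) (hW1 : ∑ x, W x = 1) (x : G) :
    ∑ C ∈ ℬ, tailMass C e W x ≤ M := by
  calc ∑ C ∈ ℬ, tailMass C e W x
      = ∑ v ∈ (univ.erase 0).erase e, ∑ _C ∈ ℬ.filter (v ∈ ·), W (x + v) := by
        refine sum_comm' fun C v => ?_
        simp only [mem_erase, mem_filter, mem_univ, true_and]
        tauto
    _ ≤ ∑ v ∈ (univ.erase 0).erase e, (M : ℝ) * W (x + v) := by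
        refine sum_le_sum fun v hv => ?_
        obtain ⟨hve, hv0, -⟩ := by simpa only [mem_erase] using hv
        rw [sum_const, nsmul_eq_mul]
        exact mul_le_mul_of_nonneg_right (by exact_mod_cast hM v hv0 hve) (hW _)
    _ ≤ ∑ v, (M : ℝ) * W (x + v) :=
        sum_le_sum_of_subset_of_nonneg (subset_univ _) fun _ _ _ =>
          mul_nonneg M.cast_nonneg (hW _)
    _ = M := by
        rw [← mul_sum, Fintype.sum_equiv (Equiv.addLeft x) (fun v => W (x + v)) W fun _ => rfl,
          hW1, mul_one]

lemma mean_sum_mul_tailMass_rpow_le {ℬ : Finset σ} (hℬ : ℬ.Nonempty) {e : G} {M : ℕ}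
    (hM : ∀ v, v ≠ 0 → v ≠ e → #(ℬ.filter (v ∈ ·)) ≤ M)
    {W : G → ℝ} (hW : ∀ x, 0 ≤ W x) (hW1 : ∑ x, W x = 1) {q : ℝ} (hq0 : 0 ≤ q) (hq1 : q ≤ 1) :
    (1 / #ℬ) * ∑ C ∈ ℬ, ∑ x, W x * tailMass C e W x ^ q ≤ ((M : ℝ) / #ℬ) ^ q := by
  have hjensen : ∀ x, ∑ C ∈ ℬ, (1 / #ℬ : ℝ) * tailMass C e W x ^ q ≤ ((M : ℝ) / #ℬ) ^ q :=
    fun x => calc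
      _ ≤ (∑ C ∈ ℬ, (1 / #ℬ : ℝ) * tailMass C e W x) ^ q :=
        (Real.concaveOn_rpow hq0 hq1).le_map_sum (fun _ _ => by positivity)
          (by rw [sum_const, nsmul_eq_mul]; field_simp)
          (fun C _ => Set.mem_Ici.2 (tailMass_nonneg C e hW x))
      _ ≤ ((M : ℝ) / #ℬ) ^ q := by
        gcongr
        · exact sum_nonneg fun C _ => by have := tailMass_nonneg C e hW x; positivity
        · rw [← mul_sum, one_div_mul_eq_div]
          gcongr
          exact sum_tailMass_le hM hW hW1 x
  calc (1 / #ℬ) * ∑ C ∈ ℬ, ∑ x, W x * tailMass C e W x ^ q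
      = ∑ x, W x * ∑ C ∈ ℬ, (1 / #ℬ : ℝ) * tailMass C e W x ^ q := by
        simp only [mul_sum]
        rw [sum_comm]
        exact sum_congr rfl fun _ _ => sum_congr rfl fun _ _ => by ring
    _ ≤ ∑ x, W x * ((M : ℝ) / #ℬ) ^ q :=
        sum_le_sum fun x _ => mul_le_mul_of_nonneg_left (hjensen x) (hW x)
    _ = ((M : ℝ) / #ℬ) ^ q := by rw [← sum_mul, hW1, one_mul]

theorem mean_sum_rpow_sum_filter_mem_le [AddSubgroupClass σ G] {ℬ : Finset σ}
    (hℬ : ℬ.Nonempty) {e : G} (he : e ≠ 0) (heC : ∀ C ∈ ℬ, e ∈ C) {K M : ℕ}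
    (hK : ∀ C ∈ ℬ, #(univ.filter (· ∈ C)) = K)
    (hM : ∀ v, v ≠ 0 → v ≠ e → #(ℬ.filter (v ∈ ·)) ≤ M)
    {W : G → ℝ} (hW : ∀ x, 0 ≤ W x) (hW1 : ∑ x, W x = 1) {α : ℝ} (hα1 : 1 ≤ α) (hα2 : α ≤ 2) :
    (1 / #ℬ) * ∑ C ∈ ℬ, ∑ y, (∑ c ∈ univ.filter (· ∈ C), W (y + c)) ^ α ≤
      K * (∑ x, W x ^ α + ∑ x, W x * W (x + e) ^ (α - 1) + ((M : ℝ) / #ℬ) ^ (α - 1)) := by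
  set A := ∑ x, W x ^ α + ∑ x, W x * W (x + e) ^ (α - 1)
  calc (1 / #ℬ) * ∑ C ∈ ℬ, ∑ y, (∑ c ∈ univ.filter (· ∈ C), W (y + c)) ^ α
      ≤ (1 / #ℬ) * ∑ C ∈ ℬ, K * (A + ∑ x, W x * tailMass C e W x ^ (α - 1)) := by
        gcongr with C hC
        rw [← hK C hC]
        exact sum_rpow_sum_filter_mem_le he (heC C hC) hW hα1 hα2
    _ = K * (A + (1 / #ℬ) * ∑ C ∈ ℬ, ∑ x, W x * tailMass C e W x ^ (α - 1)) := by
        rw [← mul_sum, sum_add_distrib, sum_const, nsmul_eq_mul]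
        field_simp
    _ ≤ K * (A + ((M : ℝ) / #ℬ) ^ (α - 1)) := by
        gcongr
        exact mean_sum_mul_tailMass_rpow_le hℬ hM hW hW1 (by linarith) (by linarith)

end Periodization

lemma card_filter_mem_eq_pow_finrank_s12 {K V : Type*} [Field K] [Fintype K] [AddCommGroup V]
    [Module K V] [Fintype V] (C : Submodule K V) :
    #(univ.filter (· ∈ C)) = Fintype.card K ^ Module.finrank K C := by
  rw [← Fintype.card_subtype, ← Nat.card_eq_fintype_card, Module.natCard_eq_pow_finrank (K := K),
    Nat.card_eq_fintype_card]

lemma two_rpow_sub_mul_two_pow (t : ℕ) (α : ℝ) :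
    (2 : ℝ) ^ (((2 * t : ℕ) : ℝ) * (α - 1) - t * α) * 2 ^ t = (2 ^ t) ^ (α - 1) := by
  rw [← Real.rpow_natCast, ← Real.rpow_add two_pos, ← Real.rpow_mul zero_le_two]
  congr 1
  push_cast
  ring

theorem smoothing_random_self_dual_code_general
    (t : ℕ) (ht : 2 ≤ t) (α : ℝ) (hα1 : 1 < α) (hα2 : α < 2)
    (W : (Fin (2 * t) → ZMod 2) → ℝ) (hW : ∀ x, 0 ≤ W x)
    (hW1 : ∑ x : Fin (2 * t) → ZMod 2, W x = 1)
    (ℬ : Finset (Submodule (ZMod 2) (Fin (2 * t) → ZMod 2))) (hne : ℬ.Nonempty)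
    (hdim : ∀ C ∈ ℬ, Module.finrank (ZMod 2) C = t)
    (hone : ∀ C ∈ ℬ, (fun _ => 1 : Fin (2 * t) → ZMod 2) ∈ C)
    (hdiv4 : ∀ C ∈ ℬ, ∀ c ∈ C, 4 ∣ hammingNorm c)
    (hbal : ∃ M : ℕ, M * (2 ^ (t - 2) + 1) = ℬ.card ∧
      ∀ v : Fin (2 * t) → ZMod 2, v ≠ 0 → v ≠ (fun _ => 1) → 4 ∣ hammingNorm v →
        (ℬ.filter (fun C => v ∈ C)).card = M) :
    (1 / (ℬ.card : ℝ)) *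
      ∑ C ∈ ℬ,
        (2 : ℝ) ^ (((2 * t : ℕ) : ℝ) * (α - 1) - (t : ℝ) * α) *
          ∑ y : Fin (2 * t) → ZMod 2,
            (∑ c ∈ Finset.univ.filter (fun c : Fin (2 * t) → ZMod 2 => c ∈ C),
              W (y + c)) ^ α
    ≤ (2 : ℝ) ^ ((α - 1) * (t : ℝ)) * (∑ x : Fin (2 * t) → ZMod 2, W x ^ α)
      + (2 : ℝ) ^ ((α - 1) * (t : ℝ)) *
          (∑ z : Fin (2 * t) → ZMod 2,
            W z * W (z + (fun _ => 1)) ^ (α - 1))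
      + ((2 : ℝ) ^ t / ((2 : ℝ) ^ (t - 2) + 1)) ^ (α - 1) := by
  obtain ⟨M, hMcard, hMcount⟩ := hbal
  have hone_ne : (fun _ => 1 : Fin (2 * t) → ZMod 2) ≠ 0 := fun h =>
    one_ne_zero (congrFun h ⟨0, by omega⟩)
  have hM : ∀ v, v ≠ 0 → v ≠ (fun _ => 1) → #(ℬ.filter (v ∈ ·)) ≤ M := fun v hv0 hv1 => by
    by_cases h4 : 4 ∣ hammingNorm v
    · exact (hMcount v hv0 hv1 h4).le
    · simp [filter_false_of_mem fun C hC hvC => h4 (hdiv4 C hC v hvC)]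
  have hK : ∀ C ∈ ℬ, #(univ.filter (· ∈ C)) = 2 ^ t := fun C hC => by
    rw [card_filter_mem_eq_pow_finrank_s12, ZMod.card, hdim C hC]
  have hratio : (M : ℝ) / #ℬ = 1 / (2 ^ (t - 2) + 1) := by
    have hN : (#ℬ : ℝ) ≠ 0 := by exact_mod_cast hne.card_pos.ne'
    rw [div_eq_div_iff hN (by positivity), one_mul]
    exact_mod_cast hMcard
  have hmean := mean_sum_rpow_sum_filter_mem_le hne hone_ne hone hK hM hW hW1 hα1.le hα2.le
  rw [hratio] at hmean
  calc
    _ = (2 : ℝ) ^ (((2 * t : ℕ) : ℝ) * (α - 1) - t * α) * ((1 / #ℬ) * ∑ C ∈ ℬ,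
        ∑ y, (∑ c ∈ univ.filter (· ∈ C), W (y + c)) ^ α) := by
      rw [← mul_sum, mul_left_comm]
    _ ≤ _ := mul_le_mul_of_nonneg_left hmean (by positivity)
    _ = _ := by
      rw [Nat.cast_pow, Nat.cast_ofNat, ← mul_assoc, two_rpow_sub_mul_two_pow, mul_comm (α - 1),
        Real.rpow_natCast_mul zero_le_two, Real.div_rpow (by positivity) (by positivity),
        Real.div_rpow (by positivity) (by positivity), Real.one_rpow]
      ring

/-- Smoothing bound for random (doubly-even, self-dual) `[2t, t]` codes, for
Rényi parameter `α ∈ (1,2)`: averaging the exponentiated Rényi divergence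
`2^{(α-1)D_α(U_C + N ‖ U)}` over the family `ℬ` gives at most
`2^{(α-1)t} ∑_x W(x)^α + 2^{(α-1)t} ∑_z W(z)W(z+𝟏)^{α-1} + (2^t/(2^{t-2}+1))^{α-1}`. -/
theorem smoothing_random_self_dual_code
    (t : ℕ) (ht : 2 ≤ t) (α : ℝ) (hα1 : 1 < α) (hα2 : α < 2)
    (W : (Fin (2 * t) → ZMod 2) → ℝ) (hW : ∀ x, 0 ≤ W x)
    (hW1 : ∑ x : Fin (2 * t) → ZMod 2, W x = 1)
    (ℬ : Finset (Submodule (ZMod 2) (Fin (2 * t) → ZMod 2))) (hne : ℬ.Nonempty)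
    (hdim : ∀ C ∈ ℬ, Module.finrank (ZMod 2) C = t)
    (hself : ∀ C ∈ ℬ, ∀ x : Fin (2 * t) → ZMod 2,
      x ∈ C ↔ ∀ c ∈ C, ∑ i, x i * c i = 0)
    (hone : ∀ C ∈ ℬ, (fun _ => 1 : Fin (2 * t) → ZMod 2) ∈ C)
    (hdiv4 : ∀ C ∈ ℬ, ∀ c ∈ C, 4 ∣ hammingNorm c)
    (hbal : ∃ M : ℕ, M * (2 ^ (t - 2) + 1) = ℬ.card ∧
      ∀ v : Fin (2 * t) → ZMod 2, v ≠ 0 → v ≠ (fun _ => 1) → 4 ∣ hammingNorm v →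
        (ℬ.filter (fun C => v ∈ C)).card = M) :
    (1 / (ℬ.card : ℝ)) *
      ∑ C ∈ ℬ,
        (2 : ℝ) ^ (((2 * t : ℕ) : ℝ) * (α - 1) - (t : ℝ) * α) *
          ∑ y : Fin (2 * t) → ZMod 2,
            (∑ c ∈ Finset.univ.filter (fun c : Fin (2 * t) → ZMod 2 => c ∈ C),
              W (y + c)) ^ α
    ≤ (2 : ℝ) ^ ((α - 1) * (t : ℝ)) * (∑ x : Fin (2 * t) → ZMod 2, W x ^ α)
      + (2 : ℝ) ^ ((α - 1) * (t : ℝ)) *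
          (∑ z : Fin (2 * t) → ZMod 2,
            W z * W (z + (fun _ => 1)) ^ (α - 1))
      + ((2 : ℝ) ^ t / ((2 : ℝ) ^ (t - 2) + 1)) ^ (α - 1) :=
  smoothing_random_self_dual_code_general t ht α hα1 hα2 W hW hW1 ℬ hne hdim hone hdiv4 hbal
end

section
/- Let 1 ≤ k ≤ n be integers, let t ∈ 𝔽_2^n be nonzero, let μ ∈ (0,1), and let α ∈ (1,2). Let P(x) = μ^{w(x)}(1−μ)^{n−w(x)} be the Ber_μ^{⊗n} probability mass function on 𝔽_2^n, set p = (1 − (1 − 2μ)^{w(t)})/2 (so 0 < p < 1), and for b ∈ {0,1} let P_b be the conditional PMF P_b(x) = P(x)·1[⟨x,t⟩ = b] / ∑_{x' : ⟨x',t⟩ = b} P(x'). For each matrix G ∈ 𝔽_2^{k×n} of rank k, define the joint PMF Q_G on 𝔽_2^k × 𝔽_2 by Q_G(u, b) = ∑_{x ∈ 𝔽_2^n : xG^⊤ = u and ⟨x,t⟩ = b} P(x). Then, averaging uniformly over all rank-k matrices G ∈ 𝔽_2^{k×n}: E_G [ ∑_{u ∈ 𝔽_2^k} ∑_{b ∈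 {0,1}} Q_G(u,b)^α · 2^{k(α−1)} · ( p^b (1−p)^{1−b} )^{1−α} ] ≤ p · 2^{(α−1)k} · ∑_{x ∈ 𝔽_2^n} P_1(x)^α + (1−p) · 2^{(α−1)k} · ∑_{x ∈ 𝔽_2^n} P_0(x)^α + 1. -/
/-!
Fix `b` and a matrix `G`. With `Q(u)` the `Ber_μ^{⊗n}`-mass of `{x : ⟨x,t⟩ = b, xGᵀ = u}`,
`∑_u Q(u)^α = ∑_x P(x) Q(xGᵀ)^(α-1)`, and subadditivity of `r ↦ r^(α-1)` (as `α ≤ 2`) splits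
`Q(xGᵀ)` into `P(x)` and the mass `R_G(x)` of the other points of the fibre of `x`. A uniformly
random matrix of full rank `k` sends a fixed nonzero vector to `0` with probability at most
`2^(-k)`, so `E_G R_G(x) ≤ 2^(-k) p_b` with `p_b = P(⟨x,t⟩ = b)`, and Jensen's inequality for the
concave `r ↦ r^(α-1)` takes the average inside the power. After weighting by
`2^(k(α-1)) p_b^(1-α)` the collision terms add up to `p_0 + p_1 = 1`; the value of `p_1` comes from
the character sum `∑_x P(x) (-1)^⟨x,t⟩ = (1-2μ)^w(t)`.
-/

open scoped Classical
open Finset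

/-- The `Ber_μ^{⊗n}` probability mass function on `𝔽_2^n`. -/
noncomputable def bernoulliPMF (n : ℕ) (μ : ℝ) (x : Fin n → ZMod 2) : ℝ :=
  μ ^ hammingNorm x * (1 - μ) ^ (n - hammingNorm x)

/-- The conditional PMF of `Ber_μ^{⊗n}` given `⟨x,t⟩ = b`. -/
noncomputable def condBernoulliPMF (n : ℕ) (μ : ℝ) (t : Fin n → ZMod 2)
    (b : ZMod 2) (x : Fin n → ZMod 2) : ℝ :=
  (if (∑ i, x i * t i) = b then bernoulliPMF n μ x else 0) /
    ∑ x' ∈ Finset.univ.filter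
        (fun x' : Fin n → ZMod 2 => (∑ i, x' i * t i) = b),
      bernoulliPMF n μ x'

/-- The joint PMF of `(rG^⊤, ⟨r,t⟩)` for `r ∼ Ber_μ^{⊗n}`. -/
noncomputable def jointPMF (n k : ℕ) (μ : ℝ) (t : Fin n → ZMod 2)
    (G : Matrix (Fin k) (Fin n) (ZMod 2)) (u : Fin k → ZMod 2) (b : ZMod 2) : ℝ :=
  ∑ x ∈ Finset.univ.filter
      (fun x : Fin n → ZMod 2 => G.mulVec x = u ∧ (∑ i, x i * t i) = b),
    bernoulliPMF n μ x

section Hashing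

variable {ι X U : Type*} [DecidableEq U]

noncomputable def collisionMass (f : X → U) (S : Finset X) (P : X → ℝ) (x : X) : ℝ :=
  ∑ x' ∈ (S.erase x).filter (fun x' => f x' = f x), P x'

lemma collisionMass_nonneg (f : X → U) {S : Finset X} {P : X → ℝ} (hP : ∀ x ∈ S, 0 ≤ P x)
    (x : X) : 0 ≤ collisionMass f S P x :=
  sum_nonneg fun x' hx' => hP x' (mem_of_mem_erase (mem_filter.mp hx').1)

lemma sum_filter_eq_add_collisionMass (f : X → U) (S : Finset X) (P : X → ℝ) {x : X}
    (hx : x ∈ S) :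
    ∑ x' ∈ S with f x' = f x, P x' = P x + collisionMass f S P x := by
  rw [collisionMass, filter_erase,
    add_sum_erase (S.filter fun x' => f x' = f x) P (mem_filter.mpr ⟨hx, rfl⟩)]

lemma sum_fiber_rpow_le [Fintype U] (f : X → U) {S : Finset X} {P : X → ℝ}
    (hP : ∀ x ∈ S, 0 ≤ P x) {α : ℝ} (hα1 : 1 ≤ α) (hα2 : α ≤ 2) :
    ∑ u, (∑ x ∈ S with f x = u, P x) ^ α
      ≤ ∑ x ∈ S, (P x ^ α + P x * collisionMass f S P x ^ (α - 1)) := by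
  set Q : U → ℝ := fun u => ∑ x ∈ S with f x = u, P x
  have hQ : ∀ u, 0 ≤ Q u := fun u => sum_nonneg fun x hx => hP x (mem_filter.mp hx).1
  have hsplit : ∀ a : ℝ, 0 ≤ a → a ^ α = a * a ^ (α - 1) := fun a ha => by
    rw [← Real.rpow_one_add' ha (by linarith), add_sub_cancel]
  calc ∑ u, Q u ^ α = ∑ u, ∑ x ∈ S with f x = u, P x * Q (f x) ^ (α - 1) := by
        refine sum_congr rfl fun u _ => ?_
        rw [hsplit _ (hQ u), sum_mul]
        exact sum_congr rfl fun x hx => by rw [(mem_filter.mp hx).2]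
    _ = ∑ x ∈ S, P x * Q (f x) ^ (α - 1) := sum_fiberwise S f _
    _ ≤ ∑ x ∈ S, (P x ^ α + P x * collisionMass f S P x ^ (α - 1)) := by
        refine sum_le_sum fun x hx => ?_
        rw [show Q (f x) = _ from sum_filter_eq_add_collisionMass f S P hx, hsplit _ (hP x hx),
          ← mul_add]
        exact mul_le_mul_of_nonneg_left
          (Real.rpow_add_le_add_rpow (hP x hx) (collisionMass_nonneg f hP x) (by linarith)
            (by linarith)) (hP x hx)

lemma sum_collisionMass_le (H : Finset ι) (h : ι → X → U) {S : Finset X} {P : X → ℝ}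
    (hP : ∀ x ∈ S, 0 ≤ P x) {ε : ℝ} (hε : 0 ≤ ε) {x : X}
    (hcoll : ∀ x' ∈ S, x' ≠ x → (#{i ∈ H | h i x' = h i x} : ℝ) ≤ ε * #H) :
    ∑ i ∈ H, collisionMass (h i) S P x ≤ ε * #H * ∑ x' ∈ S, P x' := by
  calc ∑ i ∈ H, collisionMass (h i) S P x
      = ∑ x' ∈ S.erase x, P x' * #{i ∈ H | h i x' = h i x} := by
        simp only [collisionMass, sum_filter]
        rw [sum_comm]
        refine sum_congr rfl fun x' _ => ?_
        rw [← sum_filter, sum_const, nsmul_eq_mul, mul_comm]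
    _ ≤ ∑ x' ∈ S.erase x, P x' * (ε * #H) := by
        refine sum_le_sum fun x' hx' => ?_
        exact mul_le_mul_of_nonneg_left (hcoll x' (mem_of_mem_erase hx') (ne_of_mem_erase hx'))
          (hP x' (mem_of_mem_erase hx'))
    _ ≤ ∑ x' ∈ S, P x' * (ε * #H) :=
        sum_le_sum_of_subset_of_nonneg (erase_subset x S) fun x' hx' _ =>
          mul_nonneg (hP x' hx') (by positivity)
    _ = ε * #H * ∑ x' ∈ S, P x' := by rw [← sum_mul, mul_comm]

/-- The leftover hash lemma for Rényi divergences of order `α ∈ (1, 2]`. -/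
lemma avg_sum_fiber_rpow_le [Fintype U] (H : Finset ι) (h : ι → X → U) {S : Finset X}
    {P : X → ℝ} (hP : ∀ x ∈ S, 0 ≤ P x) {ε : ℝ} (hε : 0 ≤ ε)
    (hcoll : ∀ x ∈ S, ∀ x' ∈ S, x' ≠ x → (#{i ∈ H | h i x' = h i x} : ℝ) ≤ ε * #H)
    {α : ℝ} (hα1 : 1 < α) (hα2 : α ≤ 2) :
    1 / (#H : ℝ) * ∑ i ∈ H, ∑ u, (∑ x ∈ S with h i x = u, P x) ^ α
      ≤ ∑ x ∈ S, P x ^ α + (∑ x ∈ S, P x) * (ε * ∑ x ∈ S, P x) ^ (α - 1) := by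
  have hPsum : 0 ≤ ∑ x ∈ S, P x := sum_nonneg hP
  rcases H.eq_empty_or_nonempty with rfl | hH
  · have hPα : 0 ≤ ∑ x ∈ S, P x ^ α := sum_nonneg fun x hx => Real.rpow_nonneg (hP x hx) α
    simp only [card_empty, Nat.cast_zero, div_zero, zero_mul]
    positivity
  have hN : (0 : ℝ) < #H := by exact_mod_cast hH.card_pos
  have hβ : 0 ≤ α - 1 := by linarith
  have hjensen : ∀ x ∈ S, ∑ i ∈ H, 1 / (#H : ℝ) * collisionMass (h i) S P x ^ (α - 1)
      ≤ (ε * ∑ x ∈ S, P x) ^ (α - 1) := by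
    intro x hx
    calc ∑ i ∈ H, 1 / (#H : ℝ) * collisionMass (h i) S P x ^ (α - 1)
        ≤ (∑ i ∈ H, 1 / (#H : ℝ) * collisionMass (h i) S P x) ^ (α - 1) :=
          (Real.concaveOn_rpow hβ (by linarith)).le_map_sum (fun _ _ => by positivity)
            (by rw [sum_const, nsmul_eq_mul]; field_simp)
            (fun i _ => Set.mem_Ici.mpr (collisionMass_nonneg (h i) hP x))
      _ ≤ (ε * ∑ x ∈ S, P x) ^ (α - 1) := by
          refine Real.rpow_le_rpow (sum_nonneg fun i _ => mul_nonneg (by positivity)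
            (collisionMass_nonneg (h i) hP x)) ?_ hβ
          rw [← mul_sum, one_div_mul_eq_div, div_le_iff₀ hN]
          linarith [sum_collisionMass_le H h hP hε (hcoll x hx)]
  calc 1 / (#H : ℝ) * ∑ i ∈ H, ∑ u, (∑ x ∈ S with h i x = u, P x) ^ α
      ≤ 1 / (#H : ℝ) * ∑ i ∈ H, ∑ x ∈ S,
          (P x ^ α + P x * collisionMass (h i) S P x ^ (α - 1)) := by
        gcongr with i
        exact sum_fiber_rpow_le (h i) hP hα1.le hα2
    _ = ∑ x ∈ S, P x ^ α
          + ∑ x ∈ S, P x * ∑ i ∈ H, 1 / (#H : ℝ) * collisionMass (h i) S P x ^ (α - 1) := by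
        rw [sum_comm, mul_sum, ← sum_add_distrib]
        refine sum_congr rfl fun x _ => ?_
        rw [sum_add_distrib, sum_const, nsmul_eq_mul, mul_add, ← mul_assoc,
          one_div_mul_cancel hN.ne', one_mul, mul_sum, mul_sum]
        exact congrArg _ (sum_congr rfl fun i _ => by ring)
    _ ≤ ∑ x ∈ S, P x ^ α + (∑ x ∈ S, P x) * (ε * ∑ x ∈ S, P x) ^ (α - 1) := by
        rw [sum_mul]
        gcongr with x hx
        · exact hP x hx
        · exact hjensen x hx

end Hashing

section Matrices

open Matrix

variable {K m n : Type*} [Field K] [Fintype m] [Fintype n]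

lemma Matrix.rank_eq_card_iff_surjective_mulVec (G : Matrix m n K) :
    G.rank = Fintype.card m ↔ Function.Surjective G.mulVec := by
  rw [Matrix.rank, ← Module.finrank_fintype_fun_eq_card (R := K)]
  exact ⟨fun h => LinearMap.range_eq_top.mp (Submodule.eq_top_of_finrank_eq h),
    fun h => by rw [LinearMap.range_eq_top.mpr h, finrank_top]⟩

lemma Matrix.rank_eq_iff_surjective_mulVec {k : ℕ} (G : Matrix (Fin k) n K) :
    G.rank = k ↔ Function.Surjective G.mulVec := by
  rw [← G.rank_eq_card_iff_surjective_mulVec, Fintype.card_fin]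

variable [Fintype K] [DecidableEq K] [DecidableEq n] {k : ℕ}

lemma card_filter_rank_mulVec_eq_zero_mul_le {v : n → K} (hv : v ≠ 0) :
    #{G : Matrix (Fin k) n K | G.rank = k ∧ G *ᵥ v = 0} * Fintype.card K ^ k
      ≤ #{G : Matrix (Fin k) n K | G.rank = k} := by
  obtain ⟨j, hj⟩ : ∃ j, v j ≠ 0 := Function.ne_iff.mp hv
  -- `G ↦ G + E w` adds `w` to `G *ᵥ v`, and keeps `G` surjective when `G *ᵥ v = 0`
  set E : (Fin k → K) → Matrix (Fin k) n K :=
    fun w => Matrix.of fun i l => if l = j then w i / v j else 0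
  have hE : ∀ w x, E w *ᵥ x = (x j / v j) • w := fun w x => by
    ext i
    simp only [E, mulVec, dotProduct, of_apply, ite_mul, zero_mul, sum_ite_eq', mem_univ,
      if_true, Pi.smul_apply, smul_eq_mul]
    ring
  have hmaps : ∀ Gw ∈ (univ.filter fun G : Matrix (Fin k) n K =>
      G.rank = k ∧ G *ᵥ v = 0) ×ˢ (univ : Finset (Fin k → K)),
      Gw.1 + E Gw.2 ∈ univ.filter fun G : Matrix (Fin k) n K => G.rank = k := by
    rintro ⟨G, w⟩ hGw
    simp only [mem_product, mem_filter, mem_univ, true_and, and_true,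
      Matrix.rank_eq_iff_surjective_mulVec] at hGw ⊢
    intro u
    obtain ⟨x, rfl⟩ := hGw.1 u
    refine ⟨x - (x j / v j) • v, ?_⟩
    simp [Matrix.add_mulVec, Matrix.mulVec_sub, Matrix.mulVec_smul, hGw.2, hE, hj]
  have hinj : Set.InjOn (fun Gw : Matrix (Fin k) n K × (Fin k → K) => Gw.1 + E Gw.2)
      ((univ.filter fun G : Matrix (Fin k) n K =>
        G.rank = k ∧ G *ᵥ v = 0) ×ˢ (univ : Finset (Fin k → K)) : Finset _) := by
    rintro ⟨G₁, w₁⟩ h₁ ⟨G₂, w₂⟩ h₂ heq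
    simp only [coe_product, Set.mem_prod, coe_filter, Set.mem_ofPred_eq, coe_univ,
      Set.mem_univ, and_true] at h₁ h₂ heq
    have hw : w₁ = w₂ := by
      simpa [Matrix.add_mulVec, h₁.2, h₂.2, hE, hj] using congrArg (· *ᵥ v) heq
    subst hw
    simp only [Prod.mk.injEq, and_true]
    exact add_right_cancel heq
  simpa [card_product, Fintype.card_fun] using card_le_card_of_injOn _ hmaps hinj

lemma card_filter_rank_mulVec_eq_le {x x' : n → K} (hne : x' ≠ x) :
    (#{G ∈ univ.filter fun G : Matrix (Fin k) n K => G.rank = k | G *ᵥ x' = G *ᵥ x} : ℝ)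
      ≤ ((Fintype.card K : ℝ) ^ k)⁻¹ * #{G : Matrix (Fin k) n K | G.rank = k} := by
  have hq : (0 : ℝ) < (Fintype.card K : ℝ) ^ k := by positivity
  rw [inv_mul_eq_div, le_div_iff₀ hq, filter_filter]
  simp only [← sub_eq_zero (a := _ *ᵥ x'), ← Matrix.mulVec_sub]
  exact_mod_cast card_filter_rank_mulVec_eq_zero_mul_le (sub_ne_zero.mpr hne)

end Matrices

lemma rpow_mul_rpow_mul_add_eq {a w : ℝ} (ha : 0 < a) (hw : 0 ≤ w) {α : ℝ} (hα : α ≠ 1)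
    (A : ℝ) :
    a ^ (α - 1) * w ^ (1 - α) * (A + w * (a⁻¹ * w) ^ (α - 1))
      = w * a ^ (α - 1) * (A / w ^ α) + w := by
  -- at `w = 0` both sides vanish, as `0 ^ (1 - α) = 0` and `A / 0 = 0`
  rcases hw.eq_or_lt with rfl | hw
  · simp [Real.zero_rpow (sub_ne_zero.mpr hα.symm)]
  rw [Real.mul_rpow (inv_nonneg.mpr ha.le) hw.le, Real.inv_rpow ha.le, Real.rpow_sub hw,
    Real.rpow_sub hw, Real.rpow_one]
  have : 0 < a ^ (α - 1) := Real.rpow_pos_of_pos ha _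
  have : 0 < w ^ α := Real.rpow_pos_of_pos hw _
  field_simp

lemma AddChar.map_sum_eq_prod {A M ι : Type*} [AddCommMonoid A] [CommMonoid M]
    (ψ : AddChar A M) (s : Finset ι) (f : ι → A) : ψ (∑ i ∈ s, f i) = ∏ i ∈ s, ψ (f i) := by
  induction s using Finset.cons_induction with
  | empty => simp
  | cons a s ha ih => rw [sum_cons, prod_cons, AddChar.map_add_eq_mul, ih]

lemma ZMod.eq_zero_or_eq_one_of_two (a : ZMod 2) : a = 0 ∨ a = 1 := by decide +revert

lemma ZMod.sum_univ_two {M : Type*} [AddCommMonoid M] (f : ZMod 2 → M) :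
    ∑ a, f a = f 0 + f 1 :=
  Fin.sum_univ_two f

noncomputable def parityChar : AddChar (ZMod 2) ℝ :=
  AddChar.zmodChar 2 (by norm_num : (-1 : ℝ) ^ 2 = 1)

lemma parityChar_one : parityChar 1 = -1 := by
  simp [parityChar, AddChar.zmodChar_apply, ZMod.val_one]

lemma ite_eq_parityChar (a b : ZMod 2) :
    (if a = b then 1 else 0 : ℝ) = (1 + parityChar b * parityChar a) / 2 := by
  rcases ZMod.eq_zero_or_eq_one_of_two a with rfl | rfl <;>
    rcases ZMod.eq_zero_or_eq_one_of_two b with rfl | rfl <;> norm_num [parityChar_one]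

lemma bernoulliPMF_eq_prod (n : ℕ) (μ : ℝ) (x : Fin n → ZMod 2) :
    bernoulliPMF n μ x = ∏ i, if x i = 0 then 1 - μ else μ := by
  have hsplit := card_filter_add_card_filter_not (s := univ) (p := fun i => x i = 0)
  rw [card_univ, Fintype.card_fin] at hsplit
  have hweight : #{i | ¬x i = 0} = hammingNorm x := rfl
  rw [prod_ite, prod_const, prod_const, bernoulliPMF, mul_comm, hweight]
  congr 2
  omega

lemma bernoulliPMF_nonneg (n : ℕ) {μ : ℝ} (hμ0 : 0 ≤ μ) (hμ1 : μ ≤ 1) (x : Fin n → ZMod 2) :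
    0 ≤ bernoulliPMF n μ x :=
  mul_nonneg (pow_nonneg hμ0 _) (pow_nonneg (sub_nonneg.mpr hμ1) _)

lemma sum_bernoulliPMF_mul_parityChar (n : ℕ) (μ : ℝ) (t : Fin n → ZMod 2) :
    ∑ x, bernoulliPMF n μ x * parityChar (∑ i, x i * t i) = (1 - 2 * μ) ^ hammingNorm t := by
  have hfactor : ∀ i, ∑ a, (if a = 0 then 1 - μ else μ) * parityChar (a * t i)
      = if t i = 0 then 1 else 1 - 2 * μ := fun i => by
    rw [ZMod.sum_univ_two]
    rcases ZMod.eq_zero_or_eq_one_of_two (t i) with hti | hti <;> simp [hti, parityChar_one]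
    ring
  simp_rw [bernoulliPMF_eq_prod, AddChar.map_sum_eq_prod, ← prod_mul_distrib]
  rw [← Fintype.prod_sum (fun i a => (if a = 0 then 1 - μ else μ) * parityChar (a * t i))]
  rw [prod_congr rfl fun i _ => hfactor i, prod_ite, prod_const_one, one_mul, prod_const]
  rfl

noncomputable def parityMass (n : ℕ) (μ : ℝ) (t : Fin n → ZMod 2) (b : ZMod 2) : ℝ :=
  ∑ x with ∑ i, x i * t i = b, bernoulliPMF n μ x

lemma parityMass_nonneg (n : ℕ) {μ : ℝ} (hμ0 : 0 ≤ μ) (hμ1 : μ ≤ 1) (t : Fin n → ZMod 2)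
    (b : ZMod 2) : 0 ≤ parityMass n μ t b :=
  sum_nonneg fun x _ => bernoulliPMF_nonneg n hμ0 hμ1 x

lemma parityMass_eq (n : ℕ) (μ : ℝ) (t : Fin n → ZMod 2) (b : ZMod 2) :
    parityMass n μ t b = (1 + parityChar b * (1 - 2 * μ) ^ hammingNorm t) / 2 := by
  have htotal : ∑ x, bernoulliPMF n μ x = 1 := by
    simpa using sum_bernoulliPMF_mul_parityChar n μ 0
  rw [parityMass, sum_filter, ← sum_bernoulliPMF_mul_parityChar, mul_sum, ← htotal,
    ← sum_add_distrib, sum_div]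
  refine sum_congr rfl fun x _ => ?_
  rw [← mul_boole, ite_eq_parityChar]
  ring

lemma sum_condBernoulliPMF_rpow (n : ℕ) {μ : ℝ} (hμ0 : 0 ≤ μ) (hμ1 : μ ≤ 1)
    (t : Fin n → ZMod 2) (b : ZMod 2) {α : ℝ} (hα : α ≠ 0) :
    ∑ x, condBernoulliPMF n μ t b x ^ α
      = (∑ x with ∑ i, x i * t i = b, bernoulliPMF n μ x ^ α) / parityMass n μ t b ^ α := by
  have hP := bernoulliPMF_nonneg n hμ0 hμ1
  rw [sum_filter, sum_div]
  refine sum_congr rfl fun x _ => ?_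
  rw [condBernoulliPMF, ← parityMass, Real.div_rpow (by split_ifs <;> simp [hP])
    (parityMass_nonneg n hμ0 hμ1 t b)]
  split_ifs <;> simp [Real.zero_rpow hα]

lemma avg_sum_jointPMF_rpow_le (n k : ℕ) {μ : ℝ} (hμ0 : 0 ≤ μ) (hμ1 : μ ≤ 1)
    (t : Fin n → ZMod 2) (b : ZMod 2) {α : ℝ} (hα1 : 1 < α) (hα2 : α ≤ 2) :
    1 / (#{G : Matrix (Fin k) (Fin n) (ZMod 2) | G.rank = k} : ℝ)
        * ∑ G : Matrix (Fin k) (Fin n) (ZMod 2) with G.rank = k,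
            ∑ u, jointPMF n k μ t G u b ^ α
      ≤ ∑ x with ∑ i, x i * t i = b, bernoulliPMF n μ x ^ α
        + parityMass n μ t b * ((2 ^ k : ℝ)⁻¹ * parityMass n μ t b) ^ (α - 1) := by
  have hjoint : ∀ G u, jointPMF n k μ t G u b
      = ∑ x ∈ univ.filter (fun x : Fin n → ZMod 2 => ∑ i, x i * t i = b) with G.mulVec x = u,
          bernoulliPMF n μ x := fun G u => by
    rw [jointPMF, filter_filter]
    exact sum_congr (filter_congr fun _ _ => and_comm) fun _ _ => rfl
  simp_rw [hjoint]
  exact avg_sum_fiber_rpow_le (univ.filter fun G : Matrix (Fin k) (Fin n) (ZMod 2) => G.rank = k)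
    (fun G => G.mulVec) (S := univ.filter fun x : Fin n → ZMod 2 => ∑ i, x i * t i = b)
    (fun x _ => bernoulliPMF_nonneg n hμ0 hμ1 x) (ε := (2 ^ k : ℝ)⁻¹) (by positivity)
    (fun x _ x' _ hne => by simpa using card_filter_rank_mulVec_eq_le (K := ZMod 2) (k := k) hne)
    hα1 hα2

lemma weighted_avg_sum_jointPMF_rpow_le (n k : ℕ) {μ : ℝ} (hμ0 : 0 ≤ μ) (hμ1 : μ ≤ 1)
    (t : Fin n → ZMod 2) (b : ZMod 2) {α : ℝ} (hα1 : 1 < α) (hα2 : α ≤ 2) :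
    (2 ^ k : ℝ) ^ (α - 1) * parityMass n μ t b ^ (1 - α)
        * (1 / (#{G : Matrix (Fin k) (Fin n) (ZMod 2) | G.rank = k} : ℝ)
          * ∑ G : Matrix (Fin k) (Fin n) (ZMod 2) with G.rank = k,
              ∑ u, jointPMF n k μ t G u b ^ α)
      ≤ parityMass n μ t b * (2 ^ k : ℝ) ^ (α - 1) * ∑ x, condBernoulliPMF n μ t b x ^ α
        + parityMass n μ t b := by
  calc _ ≤ (2 ^ k : ℝ) ^ (α - 1) * parityMass n μ t b ^ (1 - α)
        * (∑ x with ∑ i, x i * t i = b, bernoulliPMF n μ x ^ α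
          + parityMass n μ t b * ((2 ^ k : ℝ)⁻¹ * parityMass n μ t b) ^ (α - 1)) := by
        have := parityMass_nonneg n hμ0 hμ1 t b
        gcongr
        exact avg_sum_jointPMF_rpow_le n k hμ0 hμ1 t b hα1 hα2
    _ = _ := by
        rw [sum_condBernoulliPMF_rpow n hμ0 hμ1 t b (by linarith),
          rpow_mul_rpow_mul_add_eq (by positivity) (parityMass_nonneg n hμ0 hμ1 t b) hα1.ne']

theorem lpn_reduction_smoothing_bound_general
    (n k : ℕ)
    (t : Fin n → ZMod 2)
    (μ : ℝ) (hμ0 : 0 < μ) (hμ1 : μ < 1)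
    (α : ℝ) (hα1 : 1 < α) (hα2 : α < 2) :
    (1 / ((Finset.univ.filter
        (fun G : Matrix (Fin k) (Fin n) (ZMod 2) => G.rank = k)).card : ℝ)) *
      ∑ G ∈ Finset.univ.filter
          (fun G : Matrix (Fin k) (Fin n) (ZMod 2) => G.rank = k),
        ∑ u : Fin k → ZMod 2, ∑ b : ZMod 2,
          (jointPMF n k μ t G u b) ^ α * (2 : ℝ) ^ ((k : ℝ) * (α - 1)) *
            (if b = 1 then (1 - (1 - 2 * μ) ^ hammingNorm t) / 2
              else 1 - (1 - (1 - 2 * μ) ^ hammingNorm t) / 2) ^ (1 - α)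
    ≤ ((1 - (1 - 2 * μ) ^ hammingNorm t) / 2) * (2 : ℝ) ^ ((α - 1) * (k : ℝ)) *
          (∑ x : Fin n → ZMod 2, (condBernoulliPMF n μ t 1 x) ^ α)
      + (1 - (1 - (1 - 2 * μ) ^ hammingNorm t) / 2) * (2 : ℝ) ^ ((α - 1) * (k : ℝ)) *
          (∑ x : Fin n → ZMod 2, (condBernoulliPMF n μ t 0 x) ^ α)
      + 1 := by
  have hm1 : (1 - (1 - 2 * μ) ^ hammingNorm t) / 2 = parityMass n μ t 1 := by
    simp [parityMass_eq, parityChar_one]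
    ring
  have hm0 : 1 - parityMass n μ t 1 = parityMass n μ t 0 := by
    simp [parityMass_eq, parityChar_one]
    ring
  have hweight : ∀ b, (if b = 1 then parityMass n μ t 1 else parityMass n μ t 0)
      = parityMass n μ t b := fun b => by
    rcases ZMod.eq_zero_or_eq_one_of_two b with rfl | rfl <;> simp
  have hscale : ∀ {a : ℝ}, (2 : ℝ) ^ (a * k) = (2 ^ k : ℝ) ^ a := fun {a} => by
    rw [mul_comm, Real.rpow_natCast_mul zero_le_two]
  rw [hm1, hm0]
  simp only [hweight, hscale, mul_comm (k : ℝ)]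
  calc _ = ∑ b, (2 ^ k : ℝ) ^ (α - 1) * parityMass n μ t b ^ (1 - α)
        * (1 / (#{G : Matrix (Fin k) (Fin n) (ZMod 2) | G.rank = k} : ℝ)
          * ∑ G : Matrix (Fin k) (Fin n) (ZMod 2) with G.rank = k,
              ∑ u, jointPMF n k μ t G u b ^ α) := by
        rw [sum_congr rfl fun G _ => sum_comm, sum_comm, mul_sum]
        refine sum_congr rfl fun b _ => ?_
        simp only [← sum_mul]
        ring
    _ ≤ ∑ b, (parityMass n μ t b * (2 ^ k : ℝ) ^ (α - 1) * ∑ x, condBernoulliPMF n μ t b x ^ α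
          + parityMass n μ t b) :=
        sum_le_sum fun b _ =>
          weighted_avg_sum_jointPMF_rpow_le n k hμ0.le hμ1.le t b hα1 hα2.le
    _ = _ := by
        rw [ZMod.sum_univ_two]
        linarith

/-- Averaging over all rank-`k` matrices `G ∈ 𝔽_2^{k×n}`, the exponentiated
Rényi divergence of order `α ∈ (1,2)` between the law of `(rG^⊤, ⟨r,t⟩)` for
`r ∼ Ber_μ^{⊗n}` and `U_{𝔽_2^k} ⊗ Ber_p`, with `p = (1-(1-2μ)^{w(t)})/2`, is
at most `p 2^{(α-1)k} ∑_x P₁(x)^α + (1-p) 2^{(α-1)k} ∑_x P₀(x)^α + 1`. -/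
theorem lpn_reduction_smoothing_bound
    (n k : ℕ) (hk : 1 ≤ k) (hkn : k ≤ n)
    (t : Fin n → ZMod 2) (ht : t ≠ 0)
    (μ : ℝ) (hμ0 : 0 < μ) (hμ1 : μ < 1)
    (α : ℝ) (hα1 : 1 < α) (hα2 : α < 2) :
    (1 / ((Finset.univ.filter
        (fun G : Matrix (Fin k) (Fin n) (ZMod 2) => G.rank = k)).card : ℝ)) *
      ∑ G ∈ Finset.univ.filter
          (fun G : Matrix (Fin k) (Fin n) (ZMod 2) => G.rank = k),
        ∑ u : Fin k → ZMod 2, ∑ b : ZMod 2,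
          (jointPMF n k μ t G u b) ^ α * (2 : ℝ) ^ ((k : ℝ) * (α - 1)) *
            (if b = 1 then (1 - (1 - 2 * μ) ^ hammingNorm t) / 2
              else 1 - (1 - (1 - 2 * μ) ^ hammingNorm t) / 2) ^ (1 - α)
    ≤ ((1 - (1 - 2 * μ) ^ hammingNorm t) / 2) * (2 : ℝ) ^ ((α - 1) * (k : ℝ)) *
          (∑ x : Fin n → ZMod 2, (condBernoulliPMF n μ t 1 x) ^ α)
      + (1 - (1 - (1 - 2 * μ) ^ hammingNorm t) / 2) * (2 : ℝ) ^ ((α - 1) * (k : ℝ)) *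
          (∑ x : Fin n → ZMod 2, (condBernoulliPMF n μ t 0 x) ^ α)
      + 1 :=
  lpn_reduction_smoothing_bound_general n k t μ hμ0 hμ1 α hα1 hα2
end
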